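/- arXiv:1810.01558 — 3 statements merged into one kernel-verified Lean document; each statement's English description precedes it below -/
import Mathlib

section
/- Let μ be a compactly supported probability measure on ℝⁿ, let K be the convex hull of its support with diameter D, and let f : ℝⁿ → ℝ be continuously differentiable. Let W be the convex hull of ∇f(K). Then for any x ∈ K, f(x) ≤ sup_{λ ∈ W} {⟨λ, x⟩ − Λ_μ(λ)} + sup_{z ∈ ℝⁿ} {f(z) − Λ*_μ(z)}. -/
open MeasureTheory Set
open scoped RealInnerProductSpace

lemma aux_key {M : Type*} [AddCommMonoid M] {m k : ℕ} (hmk : m ≤ k) (G : Fin m → M) :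
    ∑ i : Fin k, (if h : (i : ℕ) < m then G ⟨i, h⟩ else 0) = ∑ j, G j := by
  have h1 : ∑ i : Fin k, (if h : (i : ℕ) < m then G ⟨i, h⟩ else 0)
      = ∑ i ∈ Finset.range k, (if h : i < m then G ⟨i, h⟩ else 0) :=
    Fin.sum_univ_eq_sum_range (fun i => if h : i < m then G ⟨i, h⟩ else 0) k
  have h2 : ∑ i ∈ Finset.range m, (if h : i < m then G ⟨i, h⟩ else 0)
      = ∑ i ∈ Finset.range k, (if h : i < m then G ⟨i, h⟩ else 0) := by
    apply Finset.sum_subset (Finset.range_subset_range.2 hmk)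
    intro i _ hi
    rw [Finset.mem_range] at hi
    rw [dif_neg hi]
  have h3 : ∑ i : Fin m, (if h : (i : ℕ) < m then G ⟨i, h⟩ else 0)
      = ∑ i ∈ Finset.range m, (if h : i < m then G ⟨i, h⟩ else 0) :=
    Fin.sum_univ_eq_sum_range (fun i => if h : i < m then G ⟨i, h⟩ else 0) m
  rw [h1, ← h2, ← h3]
  apply Finset.sum_congr rfl
  intro j _
  rw [dif_pos j.isLt]

variable {E : Type*} [NormedAddCommGroup E] [NormedSpace ℝ E] [FiniteDimensional ℝ E]

/-- Convex hull of a compact set in a finite-dimensional normed space is compact. -/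
lemma aux_isCompact_convexHull {s : Set E} (hs : IsCompact s) :
    IsCompact (convexHull ℝ s) := by
  rcases s.eq_empty_or_nonempty with rfl | ⟨a, ha⟩
  · simp
  set d := Module.finrank ℝ E with hd
  let T : (Fin (d + 1) → ℝ) × (Fin (d + 1) → E) → E := fun p => ∑ i, p.1 i • p.2 i
  have hT : Continuous T := by
    apply continuous_finset_sum
    intro i _
    exact ((continuous_apply i).comp continuous_fst).smul
      ((continuous_apply i).comp continuous_snd)
  have hcomp : IsCompact ((stdSimplex ℝ (Fin (d + 1))) ×ˢ
      (univ.pi fun _ : Fin (d + 1) => s)) :=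
    (isCompact_stdSimplex (𝕜 := ℝ) (ι := Fin (d + 1))).prod (isCompact_univ_pi fun _ => hs)
  have himg : convexHull ℝ s
      = T '' ((stdSimplex ℝ (Fin (d + 1))) ×ˢ (univ.pi fun _ : Fin (d + 1) => s)) := by
    apply Subset.antisymm
    · intro x hx
      obtain ⟨ι, hι, z, w, hzs, hai, hwpos, hwsum, hcomb⟩ :=
        eq_pos_convex_span_of_mem_convexHull hx
      have hcard : Fintype.card ι ≤ d + 1 := by
        refine hai.card_le_finrank_succ.trans ?_
        have := Submodule.finrank_le (vectorSpan ℝ (Set.range z))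
        omega
      set m := Fintype.card ι with hm
      let e := Fintype.equivFin ι
      classical
      refine ⟨(fun i => if h : (i : ℕ) < m then w (e.symm ⟨i, h⟩) else 0,
              fun i => if h : (i : ℕ) < m then z (e.symm ⟨i, h⟩) else a), ⟨⟨?_, ?_⟩, ?_⟩, ?_⟩
      · intro i
        dsimp only
        split
        · exact (hwpos _).le
        · exact le_rfl
      · rw [aux_key hcard (fun j => w (e.symm j))]
        rw [Equiv.sum_comp e.symm w]
        exact hwsum
      · intro i _
        dsimp only
        split
        · exact hzs (Set.mem_range_self _)
        · exact ha
      · show ∑ i : Fin (d + 1), _ = x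
        have : ∀ i : Fin (d + 1),
            (if h : (i : ℕ) < m then w (e.symm ⟨i, h⟩) else 0) •
              (if h : (i : ℕ) < m then z (e.symm ⟨i, h⟩) else a)
            = (if h : (i : ℕ) < m then w (e.symm ⟨i, h⟩) • z (e.symm ⟨i, h⟩) else 0) := by
          intro i
          split
          · rfl
          · rw [zero_smul]
        rw [Finset.sum_congr rfl fun i _ => this i,
          aux_key hcard (fun j => w (e.symm j) • z (e.symm j)),
          Equiv.sum_comp e.symm (fun c => w c • z c)]
        exact hcomb
    · rintro _ ⟨⟨w, y⟩, ⟨hw, hy⟩, rfl⟩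
      exact (convex_convexHull ℝ s).sum_mem (fun i _ => hw.1 i) hw.2
        (fun i _ => subset_convexHull ℝ s (hy i (Set.mem_univ i)))
  rw [himg]
  exact hcomp.image hT

set_option maxHeartbeats 1000000
set_option synthInstance.maxHeartbeats 400000

open MeasureTheory Set
open scoped RealInnerProductSpace

variable {E : Type*} [NormedAddCommGroup E] [InnerProductSpace ℝ E] [FiniteDimensional ℝ E]
  [MeasurableSpace E] [OpensMeasurableSpace E]

section Meas

variable {μ : Measure E} {S : Set E}

lemma aux_ae_mem (hSμ : μ Sᶜ = 0) : ∀ᵐ a ∂μ, a ∈ S := by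
  rw [MeasureTheory.ae_iff]
  exact hSμ

lemma aux_integrable [IsFiniteMeasure μ] (hS : IsCompact S) (hSμ : μ Sᶜ = 0)
    {F : Type*} [NormedAddCommGroup F] {g : E → F} (hg : Continuous g) :
    Integrable g μ := by
  obtain ⟨C, hC⟩ := hS.exists_bound_of_continuousOn hg.continuousOn
  refine (integrable_const C).mono' hg.aestronglyMeasurable ?_
  filter_upwards [aux_ae_mem hSμ] with a ha using hC a ha

lemma aux_I_pos [IsProbabilityMeasure μ] (hS : IsCompact S) (hSμ : μ Sᶜ = 0) (l : E) :
    0 < ∫ a, Real.exp ⟪l, a⟫ ∂μ := by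
  obtain ⟨C, hC⟩ := hS.exists_bound_of_continuousOn
    (continuous_const.inner continuous_id).continuousOn (f := fun a => ⟪l, a⟫)
  have hlow : ∀ᵐ a ∂μ, Real.exp (-C) ≤ Real.exp ⟪l, a⟫ := by
    filter_upwards [aux_ae_mem hSμ] with a ha
    exact Real.exp_le_exp.2 (neg_le_of_abs_le (by simpa [Real.norm_eq_abs] using hC a ha))
  calc (0 : ℝ) < Real.exp (-C) := Real.exp_pos _
    _ = ∫ _, Real.exp (-C) ∂μ := by simp
    _ ≤ ∫ a, Real.exp ⟪l, a⟫ ∂μ := by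
        refine integral_mono_ae (integrable_const _) ?_ hlow
        exact aux_integrable hS hSμ (Real.continuous_exp.comp (continuous_const.inner continuous_id))

end Meas

section Deriv

variable (μ : Measure E) [IsProbabilityMeasure μ] {S : Set E}

lemma aux_exp_fderiv (a l : E) :
    HasFDerivAt (fun l : E => Real.exp ⟪l, a⟫) (Real.exp ⟪l, a⟫ • innerSL ℝ a) l := by
  have h1 : HasFDerivAt (fun l : E => ⟪l, a⟫) (innerSL ℝ a) l := by
    have : (fun l : E => ⟪l, a⟫) = fun l : E => (innerSL ℝ a) l := by
      funext l; simp [real_inner_comm]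
    rw [this]
    exact (innerSL ℝ a).hasFDerivAt
  exact (Real.hasDerivAt_exp ⟪l, a⟫).comp_hasFDerivAt l h1

lemma aux_hasFDerivAt_I (hS : IsCompact S) (hSμ : μ Sᶜ = 0) (l₀ : E) :
    HasFDerivAt (fun l => ∫ a, Real.exp ⟪l, a⟫ ∂μ)
      (innerSL ℝ (∫ a, Real.exp ⟪l₀, a⟫ • a ∂μ)) l₀ := by
  obtain ⟨R₀, hR₀⟩ := hS.exists_bound_of_continuousOn continuous_id.continuousOn
  set R := max R₀ 0 with hR
  have hRa : ∀ a ∈ S, ‖a‖ ≤ R := fun a ha => le_max_of_le_left (by simpa using hR₀ a ha)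
  have hR0 : 0 ≤ R := le_max_right _ _
  set C := Real.exp ((‖l₀‖ + 1) * R) * R with hC
  have key : HasFDerivAt (fun l => ∫ a, Real.exp ⟪l, a⟫ ∂μ)
      (∫ a, Real.exp ⟪l₀, a⟫ • innerSL ℝ a ∂μ) l₀ := by
    apply hasFDerivAt_integral_of_dominated_of_fderiv_le (bound := fun _ => C)
      (F' := fun l a => Real.exp ⟪l, a⟫ • innerSL ℝ a) (Metric.ball_mem_nhds l₀ one_pos)
    · filter_upwards with l
      exact (Real.continuous_exp.comp
        (continuous_const.inner continuous_id)).aestronglyMeasurable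
    · exact aux_integrable hS hSμ
        (Real.continuous_exp.comp (continuous_const.inner continuous_id))
    · exact ((Real.continuous_exp.comp
        (continuous_const.inner continuous_id)).smul
          (innerSL ℝ (E := E)).continuous).aestronglyMeasurable
    · filter_upwards [aux_ae_mem hSμ] with a ha
      intro l hl
      have h1 : ‖l‖ ≤ ‖l₀‖ + 1 := by
        have := mem_ball_iff_norm.1 hl
        have h2 : ‖l‖ ≤ ‖l₀‖ + ‖l - l₀‖ := by
          calc ‖l‖ = ‖l₀ + (l - l₀)‖ := by rw [add_sub_cancel]
            _ ≤ ‖l₀‖ + ‖l - l₀‖ := norm_add_le _ _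
        linarith
      rw [norm_smul (Real.exp ⟪l, a⟫) (innerSL ℝ a), innerSL_apply_norm, Real.norm_eq_abs,
        abs_of_pos (Real.exp_pos _)]
      have h3 : ⟪l, a⟫ ≤ (‖l₀‖ + 1) * R := by
        calc ⟪l, a⟫ ≤ ‖l‖ * ‖a‖ := real_inner_le_norm _ _
          _ ≤ (‖l₀‖ + 1) * R :=
            mul_le_mul h1 (hRa a ha) (norm_nonneg _) (by positivity)
      exact mul_le_mul (Real.exp_le_exp.2 h3) (hRa a ha) (norm_nonneg _)
        (Real.exp_pos _).le
    · exact integrable_const _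
    · filter_upwards with a
      intro l _
      exact aux_exp_fderiv a l
  have heq : (∫ a, Real.exp ⟪l₀, a⟫ • innerSL ℝ a ∂μ)
      = innerSL ℝ (∫ a, Real.exp ⟪l₀, a⟫ • a ∂μ) := by
    have hint : Integrable (fun a => Real.exp ⟪l₀, a⟫ • innerSL ℝ a) μ :=
      aux_integrable hS hSμ ((Real.continuous_exp.comp
        (continuous_const.inner continuous_id)).smul (innerSL ℝ (E := E)).continuous)
    have hintG : Integrable (fun a => Real.exp ⟪l₀, a⟫ • a) μ :=
      aux_integrable hS hSμ ((Real.continuous_exp.comp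
        (continuous_const.inner continuous_id)).smul continuous_id)
    ext v
    rw [ContinuousLinearMap.integral_apply hint v]
    have h5 : (fun a : E => (Real.exp ⟪l₀, a⟫ • innerSL ℝ a) v)
        = fun a : E => ⟪v, Real.exp ⟪l₀, a⟫ • a⟫ := by
      funext a
      simp [real_inner_smul_right, real_inner_comm, mul_comm]
    rw [h5, integral_inner hintG v, innerSL_apply_apply, real_inner_comm]
  rw [← heq]
  exact key

end Deriv

section Ineq

variable (μ : Measure E) [IsProbabilityMeasure μ] {S : Set E}

lemma aux_grad_ineq (hS : IsCompact S) (hSμ : μ Sᶜ = 0) (l₀ l : E) :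
    Real.log (∫ a, Real.exp ⟪l₀, a⟫ ∂μ) +
      ⟪l - l₀, ((∫ a, Real.exp ⟪l₀, a⟫ ∂μ)⁻¹ • ∫ a, Real.exp ⟪l₀, a⟫ • a ∂μ)⟫
    ≤ Real.log (∫ a, Real.exp ⟪l, a⟫ ∂μ) := by
  set I1 := ∫ a, Real.exp ⟪l₀, a⟫ ∂μ with hI1
  set G := ∫ a, Real.exp ⟪l₀, a⟫ • a ∂μ with hG
  set u := l - l₀ with hu
  set c := ⟪u, I1⁻¹ • G⟫ with hc
  have hI1pos : 0 < I1 := aux_I_pos hS hSμ l₀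
  have hcont_exp : Continuous fun a : E => Real.exp ⟪l₀, a⟫ :=
    Real.continuous_exp.comp (continuous_const.inner continuous_id)
  have hintG : Integrable (fun a => Real.exp ⟪l₀, a⟫ • a) μ :=
    aux_integrable hS hSμ (hcont_exp.smul continuous_id)
  have hint1 : Integrable (fun a => Real.exp ⟪l₀, a⟫) μ := aux_integrable hS hSμ hcont_exp
  have hintu : Integrable (fun a => Real.exp ⟪l₀, a⟫ * ⟪u, a⟫) μ :=
    aux_integrable hS hSμ (hcont_exp.mul (continuous_const.inner continuous_id))
  have huG : ∫ a, Real.exp ⟪l₀, a⟫ * ⟪u, a⟫ ∂μ = ⟪u, G⟫ := by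
    rw [hG, ← integral_inner hintG u]
    congr 1
    funext a
    rw [real_inner_smul_right]
  have hcI : c * I1 = ⟪u, G⟫ := by
    rw [hc, real_inner_smul_right]
    field_simp
  have hpt : ∀ a : E, Real.exp ⟪l₀, a⟫ * (Real.exp c * (⟪u, a⟫ - c + 1))
      ≤ Real.exp ⟪l, a⟫ := by
    intro a
    have h1 : ⟪l, a⟫ = ⟪l₀, a⟫ + ⟪u, a⟫ := by
      rw [hu, ← inner_add_left, add_sub_cancel]
    have h2 : (⟪u, a⟫ - c) + 1 ≤ Real.exp (⟪u, a⟫ - c) := Real.add_one_le_exp _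
    have h3 : Real.exp c * (⟪u, a⟫ - c + 1) ≤ Real.exp ⟪u, a⟫ := by
      calc Real.exp c * (⟪u, a⟫ - c + 1) ≤ Real.exp c * Real.exp (⟪u, a⟫ - c) := by
            apply mul_le_mul_of_nonneg_left h2 (Real.exp_pos _).le
        _ = Real.exp ⟪u, a⟫ := by rw [← Real.exp_add]; congr 1; ring
    rw [h1, Real.exp_add]
    exact mul_le_mul_of_nonneg_left h3 (Real.exp_pos _).le
  have hLHSeq : ∫ a, Real.exp ⟪l₀, a⟫ * (Real.exp c * (⟪u, a⟫ - c + 1)) ∂μ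
      = Real.exp c * I1 := by
    have heq : (fun a : E => Real.exp ⟪l₀, a⟫ * (Real.exp c * (⟪u, a⟫ - c + 1)))
        = fun a : E => Real.exp c * (Real.exp ⟪l₀, a⟫ * ⟪u, a⟫)
            + (Real.exp c * (1 - c)) * Real.exp ⟪l₀, a⟫ := by
      funext a
      ring
    rw [heq, integral_add (hintu.const_mul _) (hint1.const_mul _), integral_const_mul,
      integral_const_mul, huG, ← hcI]
    ring
  have hmain : Real.exp c * I1 ≤ ∫ a, Real.exp ⟪l, a⟫ ∂μ := by
    rw [← hLHSeq]
    apply integral_mono ?_ (aux_integrable hS hSμ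
      (Real.continuous_exp.comp (continuous_const.inner continuous_id))) hpt
    · have : (fun a : E => Real.exp ⟪l₀, a⟫ * (Real.exp c * (⟪u, a⟫ - c + 1)))
          = fun a : E => Real.exp c * (Real.exp ⟪l₀, a⟫ * ⟪u, a⟫)
              + (Real.exp c * (1 - c)) * Real.exp ⟪l₀, a⟫ := by
        funext a; ring
      rw [this]
      exact (hintu.const_mul _).add (hint1.const_mul _)
  have hlog := Real.log_le_log (by positivity) hmain
  rw [Real.log_mul (Real.exp_ne_zero _) (ne_of_gt hI1pos), Real.log_exp] at hlog
  linarith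

lemma aux_mean_mem (hS : IsCompact S) (hSμ : μ Sᶜ = 0) {K : Set E}
    (hKconv : Convex ℝ K) (hKclosed : IsClosed K) (hSK : S ⊆ K) (l₀ : E) :
    ((∫ a, Real.exp ⟪l₀, a⟫ ∂μ)⁻¹ • ∫ a, Real.exp ⟪l₀, a⟫ • a ∂μ) ∈ K := by
  by_contra hz
  obtain ⟨φ, u, hzu, hKu⟩ := geometric_hahn_banach_point_closed hKconv hKclosed hz
  set I1 := ∫ a, Real.exp ⟪l₀, a⟫ ∂μ with hI1
  set G := ∫ a, Real.exp ⟪l₀, a⟫ • a ∂μ with hG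
  have hI1pos : 0 < I1 := aux_I_pos hS hSμ l₀
  have hcont_exp : Continuous fun a : E => Real.exp ⟪l₀, a⟫ :=
    Real.continuous_exp.comp (continuous_const.inner continuous_id)
  have hintG : Integrable (fun a => Real.exp ⟪l₀, a⟫ • a) μ :=
    aux_integrable hS hSμ (hcont_exp.smul continuous_id)
  have hφG : φ G = ∫ a, Real.exp ⟪l₀, a⟫ * φ a ∂μ := by
    rw [hG, ← φ.integral_comp_comm hintG]
    congr 1
    funext a
    rw [_root_.map_smul, smul_eq_mul]
  have hlow : u * I1 ≤ ∫ a, Real.exp ⟪l₀, a⟫ * φ a ∂μ := by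
    have h1 : (fun a : E => u * Real.exp ⟪l₀, a⟫) =ᵐ[μ] fun a => u * Real.exp ⟪l₀, a⟫ :=
      Filter.EventuallyEq.rfl
    have : ∫ a, u * Real.exp ⟪l₀, a⟫ ∂μ ≤ ∫ a, Real.exp ⟪l₀, a⟫ * φ a ∂μ := by
      apply integral_mono_ae ((aux_integrable hS hSμ hcont_exp).const_mul u)
        (aux_integrable hS hSμ (hcont_exp.mul φ.continuous))
      filter_upwards [aux_ae_mem hSμ] with a ha
      have := (hKu a (hSK ha)).le
      calc u * Real.exp ⟪l₀, a⟫ ≤ φ a * Real.exp ⟪l₀, a⟫ :=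
            mul_le_mul_of_nonneg_right this (Real.exp_pos _).le
        _ = Real.exp ⟪l₀, a⟫ * φ a := by ring
    calc u * I1 = ∫ a, u * Real.exp ⟪l₀, a⟫ ∂μ := by
          rw [hI1, ← integral_const_mul]
      _ ≤ _ := this
  have hφz : φ (I1⁻¹ • G) = I1⁻¹ * φ G := by rw [_root_.map_smul, smul_eq_mul]
  have : u ≤ φ (I1⁻¹ • G) := by
    rw [hφz, hφG, ← sub_nonneg]
    have h2 : I1⁻¹ * (∫ a, Real.exp ⟪l₀, a⟫ * φ a ∂μ) - u
        = I1⁻¹ * ((∫ a, Real.exp ⟪l₀, a⟫ * φ a ∂μ) - u * I1) := by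
      field_simp
    rw [h2]
    exact mul_nonneg (inv_nonneg.2 hI1pos.le) (sub_nonneg.2 hlow)
  exact absurd hzu (not_lt.2 this)

end Ineq


open MeasureTheory Set
open scoped RealInnerProductSpace

set_option maxHeartbeats 1000000
set_option synthInstance.maxHeartbeats 400000

/-- pointwise bound in the proof of the partition function upper bound:
for `μ` compactly supported with `K` the convex hull of its support, `f` a `C¹` function
and `W` the convex hull of `∇f(K)`, for any `x ∈ K`,
`f(x) ≤ sup_{λ ∈ W} {⟨λ,x⟩ − Λ(λ)} + sup_z {f(z) − Λ*(z)}`. -/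
theorem stmt_3 {n : ℕ} (μ : Measure (EuclideanSpace ℝ (Fin n)))
    [IsProbabilityMeasure μ]
    (S : Set (EuclideanSpace ℝ (Fin n))) (hS : IsCompact S) (hSμ : μ Sᶜ = 0)
    (K : Set (EuclideanSpace ℝ (Fin n))) (hK : K = convexHull ℝ S)
    (f : EuclideanSpace ℝ (Fin n) → ℝ) (hf : ContDiff ℝ 1 f)
    (Λ : EuclideanSpace ℝ (Fin n) → ℝ)
    (hΛ : ∀ l, Λ l = Real.log (∫ x, Real.exp ⟪l, x⟫ ∂μ))
    (Λstar : EuclideanSpace ℝ (Fin n) → EReal)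
    (hΛstar : ∀ z, Λstar z = ⨆ l, ((⟪l, z⟫ : ℝ) - (Λ l : ℝ) : EReal))
    (W : Set (EuclideanSpace ℝ (Fin n))) (hW : W = convexHull ℝ (gradient f '' K)) :
    ∀ x ∈ K, ((f x : ℝ) : EReal) ≤
      (⨆ l ∈ W, ((⟪l, x⟫ : ℝ) - (Λ l : ℝ) : EReal)) +
        ⨆ z, (((f z : ℝ) : EReal) - Λstar z) := by
  classical
  intro x hx
  -- basic facts about K and W
  have hKcomp : IsCompact K := hK ▸ aux_isCompact_convexHull hS
  have hKconv : Convex ℝ K := hK ▸ convex_convexHull ℝ S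
  have hKclosed : IsClosed K := hKcomp.isClosed
  have hSK : S ⊆ K := hK ▸ subset_convexHull ℝ S
  have hdiff : Differentiable ℝ f := hf.differentiable one_ne_zero
  have hgradcont : Continuous (gradient f) := by
    have h1 : Continuous (fderiv ℝ f) := hf.continuous_fderiv one_ne_zero
    exact (InnerProductSpace.toDual ℝ (EuclideanSpace ℝ (Fin n))).symm.continuous.comp h1
  have hWcomp : IsCompact W := hW ▸ aux_isCompact_convexHull (hKcomp.image hgradcont)
  have hWconv : Convex ℝ W := hW ▸ convex_convexHull ℝ _
  have hWne : W.Nonempty := by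
    rw [hW]
    exact (Set.Nonempty.image _ ⟨x, hx⟩).mono (subset_convexHull ℝ _)
  -- Λ and its derivative
  set I : EuclideanSpace ℝ (Fin n) → ℝ := fun l => ∫ a, Real.exp ⟪l, a⟫ ∂μ with hI
  set m : EuclideanSpace ℝ (Fin n) → EuclideanSpace ℝ (Fin n) := fun l₀ => (I l₀)⁻¹ • ∫ a, Real.exp ⟪l₀, a⟫ • a ∂μ with hm
  have hΛd : ∀ l₀, HasFDerivAt Λ (innerSL ℝ (m l₀)) l₀ := by
    intro l₀
    have hΛeq : Λ = fun l => Real.log (I l) := funext hΛ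
    rw [hΛeq]
    have h2 := (Real.hasDerivAt_log (ne_of_gt (aux_I_pos hS hSμ l₀))).comp_hasFDerivAt l₀
      (aux_hasFDerivAt_I μ hS hSμ l₀)
    have h3 : innerSL ℝ (m l₀) = (I l₀)⁻¹ • innerSL ℝ (∫ a, Real.exp ⟪l₀, a⟫ • a ∂μ) := by
      rw [hm, _root_.map_smul]
    rw [h3]
    exact h2
  have hΛcont : Continuous Λ :=
    continuous_iff_continuousAt.2 fun l => (hΛd l).differentiableAt.continuousAt
  -- maximizer of φ on W
  set φ : EuclideanSpace ℝ (Fin n) → ℝ := fun l => ⟪l, x⟫ - Λ l with hφ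
  have hφcont : Continuous φ := (continuous_id.inner continuous_const).sub hΛcont
  obtain ⟨lst, hlstW, hlstmax⟩ := hWcomp.exists_isMaxOn hWne hφcont.continuousOn
  set z := m lst with hz
  have hzK : z ∈ K := aux_mean_mem μ hS hSμ hKconv hKclosed hSK lst
  have hgrad : ∀ l, Λ lst + ⟪l - lst, z⟫ ≤ Λ l := by
    intro l
    rw [hΛ, hΛ]
    exact aux_grad_ineq μ hS hSμ lst l
  -- mean value theorem
  obtain ⟨g, hgW, hmvt⟩ : ∃ g ∈ W, f x - f z = ⟪g, x⟫ - ⟪g, z⟫ := by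
    have hline : ∀ t : ℝ, HasDerivAt (fun t : ℝ => z + t • (x - z)) (x - z) t := by
      intro t
      have h1 : HasDerivAt (fun t : ℝ => t • (x - z)) ((1 : ℝ) • (x - z)) t :=
        (hasDerivAt_id t).smul_const (x - z)
      rw [one_smul] at h1
      exact h1.const_add z
    obtain ⟨c, hc, hceq⟩ := exists_hasDerivAt_eq_slope
      (fun t : ℝ => f (z + t • (x - z)))
      (fun t : ℝ => fderiv ℝ f (z + t • (x - z)) (x - z)) one_pos
      (hdiff.continuous.comp (continuous_const.add (continuous_id.smul continuous_const))).continuousOn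
      (fun t _ => (hdiff _).hasFDerivAt.comp_hasDerivAt t (hline t))
    set ξ := z + c • (x - z) with hξ
    have hξK : ξ ∈ K := hKconv.add_smul_sub_mem hzK hx ⟨hc.1.le, hc.2.le⟩
    refine ⟨gradient f ξ, hW ▸ subset_convexHull ℝ _ (mem_image_of_mem _ hξK), ?_⟩
    have h4 : fderiv ℝ f ξ (x - z) = ⟪gradient f ξ, x - z⟫ := by
      rw [((hdiff ξ).hasGradientAt).hasFDerivAt.fderiv]
      exact InnerProductSpace.toDual_apply_apply
    have h5 : f (z + (1 : ℝ) • (x - z)) = f x := by rw [one_smul, add_sub_cancel]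
    have h6 : f (z + (0 : ℝ) • (x - z)) = f z := by rw [zero_smul, add_zero]
    rw [h4] at hceq
    rw [h5, h6] at hceq
    rw [inner_sub_right] at hceq
    rw [hceq]
    norm_num
  -- first-order optimality at lst
  have hopt : ⟪x - z, g - lst⟫ ≤ 0 := by
    have h1 : HasFDerivAt (fun l : EuclideanSpace ℝ (Fin n) => ⟪l, x⟫) (innerSL ℝ x) lst := by
      have : (fun l : EuclideanSpace ℝ (Fin n) => ⟪l, x⟫) = fun l : EuclideanSpace ℝ (Fin n) => (innerSL ℝ x) l := by
        funext l; rw [innerSL_apply_apply]; exact real_inner_comm x l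
      rw [this]
      exact (innerSL ℝ x).hasFDerivAt
    have hφd : HasFDerivAt φ (innerSL ℝ (x - z)) lst := by
      have h2 := h1.sub (hΛd lst)
      have h3 : innerSL ℝ (x - z) = innerSL ℝ x - innerSL ℝ (m lst) := by
        rw [map_sub]
      rw [h3]
      exact h2
    have hcone : g - lst ∈ posTangentConeAt W lst :=
      sub_mem_posTangentConeAt_of_segment_subset (hWconv.segment_subset hlstW hgW)
    exact hlstmax.localize.hasFDerivWithinAt_nonpos hφd.hasFDerivWithinAt hcone
  -- Fenchel upper bound at z
  have hup : Λstar z ≤ ((⟪lst, z⟫ - Λ lst : ℝ) : EReal) := by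
    rw [hΛstar]
    refine iSup_le fun l => ?_
    rw [← EReal.coe_sub, EReal.coe_le_coe_iff]
    have := hgrad l
    rw [inner_sub_left] at this
    linarith
  -- assemble
  have h1 : ((⟪lst, x⟫ - Λ lst : ℝ) : EReal) ≤ ⨆ l ∈ W, ((⟪l, x⟫ : ℝ) - (Λ l : ℝ) : EReal) := by
    have := le_biSup (f := fun l => ((⟪l, x⟫ : ℝ) - (Λ l : ℝ) : EReal)) hlstW
    rw [EReal.coe_sub]
    exact this
  have h2 : ((f z - (⟪lst, z⟫ - Λ lst) : ℝ) : EReal) ≤ ⨆ z', (((f z' : ℝ) : EReal) - Λstar z') := by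
    refine le_trans ?_ (le_iSup (fun z' => (((f z' : ℝ) : EReal) - Λstar z')) z)
    rw [EReal.coe_sub]
    exact EReal.sub_le_sub le_rfl hup
  calc ((f x : ℝ) : EReal)
      ≤ ((⟪lst, x⟫ - Λ lst : ℝ) : EReal) + ((f z - (⟪lst, z⟫ - Λ lst) : ℝ) : EReal) := by
        rw [← EReal.coe_add, EReal.coe_le_coe_iff]
        have hopt' : ⟪x - z, g - lst⟫ = (⟪g, x⟫ - ⟪g, z⟫) - (⟪lst, x⟫ - ⟪lst, z⟫) := by
          rw [inner_sub_right, inner_sub_left, inner_sub_left]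
          rw [real_inner_comm x g, real_inner_comm z g, real_inner_comm x lst,
            real_inner_comm z lst]
          try ring
        rw [hopt'] at hopt
        linarith
    _ ≤ _ := add_le_add h1 h2
end

section
/- Let f : ℝ → ℝ be a convex function with f(0) = 0 and 0 ∈ ∂f(0), and let ζ : ℝ → ℝ satisfy ζ(x) ∈ ∂f(x) for all x and ζ(0) = 0. Then for every n × n Hermitian matrix X and every 1 ≤ k ≤ n, the sum of the k largest values among f(λ_1(X)),…,f(λ_n(X)) equals sup over Hermitian Y of rank at most k of {tr f(Y) + tr(ζ(Y)(X − Y))}. In particular, X ↦ tr_[k] f(X) is convex, and if f is 1-Lipschitz it is √k-Lipschitz for the Hilbert–Schmidt norm. -/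
open scoped Matrix

/-- The Frobenius (Hilbert–Schmidt) norm of a complex matrix. -/
noncomputable def frobNorm {n : ℕ} (A : Matrix (Fin n) (Fin n) ℂ) : ℝ :=
  Real.sqrt (∑ i, ∑ j, ‖A i j‖ ^ 2)

/-- The sum of the `k` largest values of `v : Fin n → ℝ`. -/
noncomputable def sumTopK {n : ℕ} (k : ℕ) (v : Fin n → ℝ) : ℝ :=
  ⨆ s : {s : Finset (Fin n) // s.card = k}, ∑ i ∈ (s : Finset (Fin n)), v i

open Matrix

lemma le_sumTopK {n k : ℕ} (v : Fin n → ℝ) (s : Finset (Fin n)) (hs : s.card = k) :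
    ∑ i ∈ s, v i ≤ sumTopK k v :=
  le_ciSup (f := fun s : {s : Finset (Fin n) // s.card = k} => ∑ i ∈ (s:Finset (Fin n)), v i)
    (Set.Finite.bddAbove (Set.finite_range _)) ⟨s, hs⟩

lemma exists_card_eq {n k : ℕ} (hkn : k ≤ n) : ∃ s : Finset (Fin n), s.card = k := by
  obtain ⟨s, -, hs⟩ := Finset.exists_subset_card_eq
    (show k ≤ (Finset.univ : Finset (Fin n)).card by simpa using hkn)
  exact ⟨s, hs⟩

lemma sumTopK_attained {n k : ℕ} (hkn : k ≤ n) (v : Fin n → ℝ) :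
    ∃ s : Finset (Fin n), s.card = k ∧ sumTopK k v = ∑ i ∈ s, v i ∧
      ∀ i ∉ s, ∀ j ∈ s, v i ≤ v j := by
  obtain ⟨s₀, hs₀⟩ := exists_card_eq (n := n) hkn
  have hne : Nonempty {s : Finset (Fin n) // s.card = k} := ⟨⟨s₀, hs₀⟩⟩
  obtain ⟨⟨s, hs⟩, hmax⟩ := Finite.exists_max
    (fun s : {s : Finset (Fin n) // s.card = k} => ∑ i ∈ (s:Finset (Fin n)), v i)
  refine ⟨s, hs, le_antisymm (ciSup_le fun t => hmax t) (le_sumTopK v s hs), ?_⟩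
  intro i hi j hj
  by_contra hlt
  push_neg at hlt
  have hins : i ∉ s.erase j := fun h => hi (Finset.mem_of_mem_erase h)
  have hcard : (insert i (s.erase j)).card = k := by
    have h1 : 1 ≤ s.card := Finset.card_pos.mpr ⟨j, hj⟩
    rw [Finset.card_insert_of_notMem hins, Finset.card_erase_of_mem hj]
    omega
  have hsum : ∑ x ∈ insert i (s.erase j), v x = v i + (∑ x ∈ s, v x - v j) := by
    rw [Finset.sum_insert hins]
    have := Finset.sum_erase_add s v hj
    linarith
  have := hmax ⟨insert i (s.erase j), hcard⟩
  simp only [hsum] at this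
  linarith

lemma sum_weighted_le_sumTopK {n k : ℕ} (hk1 : 1 ≤ k) (hkn : k ≤ n) (a c : Fin n → ℝ)
    (ha : ∀ i, 0 ≤ a i) (hc0 : ∀ i, 0 ≤ c i) (hc1 : ∀ i, c i ≤ 1)
    (hck : ∑ i, c i ≤ (k : ℝ)) : ∑ i, c i * a i ≤ sumTopK k a := by
  obtain ⟨s, hs, hval, hprop⟩ := sumTopK_attained hkn a
  have hsne : s.Nonempty := Finset.card_pos.mp (by omega)
  obtain ⟨j₀, hj₀, hmin⟩ := s.exists_min_image a hsne
  set t := a j₀ with ht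
  have ht0 : 0 ≤ t := ha j₀
  have key : ∑ i, c i * (a i - t) ≤ ∑ i ∈ s, (a i - t) := by
    rw [← Finset.sum_add_sum_compl s (fun i => c i * (a i - t))]
    have h1 : ∑ i ∈ s, c i * (a i - t) ≤ ∑ i ∈ s, (a i - t) := by
      apply Finset.sum_le_sum
      intro i hi
      have : 0 ≤ a i - t := by linarith [hmin i hi]
      nlinarith [hc1 i, hc0 i]
    have h2 : ∑ i ∈ sᶜ, c i * (a i - t) ≤ 0 := by
      apply Finset.sum_nonpos
      intro i hi
      have hi' : i ∉ s := Finset.mem_compl.mp hi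
      have : a i ≤ t := hprop i hi' j₀ hj₀
      nlinarith [hc0 i]
    linarith
  have hsplit : ∑ i, c i * a i = ∑ i, c i * (a i - t) + (∑ i, c i) * t := by
    rw [Finset.sum_mul]
    rw [← Finset.sum_add_distrib]
    congr 1; ext i; ring
  have hsum_s : ∑ i ∈ s, (a i - t) = ∑ i ∈ s, a i - k * t := by
    rw [Finset.sum_sub_distrib]
    simp [hs]
  have : (∑ i, c i) * t ≤ k * t := mul_le_mul_of_nonneg_right hck ht0
  rw [hval]
  linarith

lemma rcofReal : (RCLike.ofReal : ℝ → ℂ) = Complex.ofReal := rfl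

lemma umul_cancel {n : ℕ} (A B X : Matrix (Fin n) (Fin n) ℂ) (h : A * B = 1) :
    A * (B * X) = X := by rw [← Matrix.mul_assoc, h, Matrix.one_mul]

lemma diag_comm_lift {n : ℕ} (d μ : Fin n → ℝ) (g : ℝ → ℝ) (W : Matrix (Fin n) (Fin n) ℂ)
    (h : Matrix.diagonal (Complex.ofReal ∘ d) * W = W * Matrix.diagonal (Complex.ofReal ∘ μ)) :
    Matrix.diagonal (Complex.ofReal ∘ g ∘ d) * W = W * Matrix.diagonal (Complex.ofReal ∘ g ∘ μ) := by
  ext i j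
  have hij := congrFun (congrFun h i) j
  simp only [Matrix.diagonal_mul, Matrix.mul_diagonal, Function.comp_apply] at hij ⊢
  rcases eq_or_ne (W i j) 0 with h0 | h0
  · simp [h0]
  · have : (d i : ℂ) = (μ j : ℂ) := by
      rw [mul_comm (W i j) _] at hij
      exact mul_right_cancel₀ h0 hij
    rw [Complex.ofReal_inj] at this
    rw [this, mul_comm]

lemma cfc_conj {n : ℕ} (U : Matrix.unitaryGroup (Fin n) ℂ) (d : Fin n → ℝ)
    {Y : Matrix (Fin n) (Fin n) ℂ}
    (hYdef : Y = U * Matrix.diagonal (Complex.ofReal ∘ d) * star (U : Matrix (Fin n) (Fin n) ℂ))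
    (hY : Y.IsHermitian) (g : ℝ → ℝ) :
    hY.cfc g = U * Matrix.diagonal (Complex.ofReal ∘ g ∘ d) * star (U : Matrix (Fin n) (Fin n) ℂ) := by
  set V : Matrix (Fin n) (Fin n) ℂ := (hY.eigenvectorUnitary : Matrix (Fin n) (Fin n) ℂ) with hV
  set μ := hY.eigenvalues with hμ
  have hsUU : star (U : Matrix (Fin n) (Fin n) ℂ) * U = 1 := Matrix.mem_unitaryGroup_iff'.mp U.2
  have hUsU : (U : Matrix (Fin n) (Fin n) ℂ) * star (U : Matrix (Fin n) (Fin n) ℂ) = 1 :=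
    Matrix.mem_unitaryGroup_iff.mp U.2
  have hsVV : star V * V = 1 := Matrix.mem_unitaryGroup_iff'.mp hY.eigenvectorUnitary.2
  have hVsV : V * star V = 1 := Matrix.mem_unitaryGroup_iff.mp hY.eigenvectorUnitary.2
  set W : Matrix (Fin n) (Fin n) ℂ := star (U : Matrix (Fin n) (Fin n) ℂ) * V with hW
  have hspec : Y = V * Matrix.diagonal (Complex.ofReal ∘ μ) * star V := by
    have := hY.spectral_theorem
    rw [rcofReal] at this
    exact this
  have hDW : Matrix.diagonal (Complex.ofReal ∘ d) * W
      = W * Matrix.diagonal (Complex.ofReal ∘ μ) := by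
    have h1 : star (U : Matrix (Fin n) (Fin n) ℂ) * Y * V
        = Matrix.diagonal (Complex.ofReal ∘ d) * W := by
      rw [hYdef, Matrix.mul_assoc _ _ (star (U : Matrix (Fin n) (Fin n) ℂ)),
        umul_cancel _ _ _ hsUU, Matrix.mul_assoc]
    have h2 : star (U : Matrix (Fin n) (Fin n) ℂ) * Y * V
        = W * Matrix.diagonal (Complex.ofReal ∘ μ) := by
      rw [hspec, Matrix.mul_assoc, Matrix.mul_assoc, Matrix.mul_assoc, hsVV, Matrix.mul_one,
        ← Matrix.mul_assoc]
    rw [← h1, h2]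
  have hgDW := diag_comm_lift d μ g W hDW
  have hUW : (U : Matrix (Fin n) (Fin n) ℂ) * W = V := by
    rw [hW, umul_cancel _ _ _ hUsU]
  have hWsV : W * star V = star (U : Matrix (Fin n) (Fin n) ℂ) := by
    rw [hW, Matrix.mul_assoc, hVsV, Matrix.mul_one]
  have hcfc : hY.cfc g = V * Matrix.diagonal (Complex.ofReal ∘ g ∘ μ) * star V := by
    rw [Matrix.IsHermitian.cfc, Unitary.conjStarAlgAut_apply, rcofReal]
  rw [hcfc, ← hUW]
  calc (U : Matrix (Fin n) (Fin n) ℂ) * W * Matrix.diagonal (Complex.ofReal ∘ g ∘ μ)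
        * star ((U : Matrix (Fin n) (Fin n) ℂ) * W)
      = (U : Matrix (Fin n) (Fin n) ℂ) * (W * Matrix.diagonal (Complex.ofReal ∘ g ∘ μ))
        * star ((U : Matrix (Fin n) (Fin n) ℂ) * W) := by rw [Matrix.mul_assoc _ W]
    _ = (U : Matrix (Fin n) (Fin n) ℂ) * (Matrix.diagonal (Complex.ofReal ∘ g ∘ d) * W)
        * star ((U : Matrix (Fin n) (Fin n) ℂ) * W) := by rw [hgDW]
    _ = (U : Matrix (Fin n) (Fin n) ℂ) * Matrix.diagonal (Complex.ofReal ∘ g ∘ d)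
        * (W * star ((U : Matrix (Fin n) (Fin n) ℂ) * W)) := by
        rw [← Matrix.mul_assoc _ _ W, Matrix.mul_assoc _ W]
    _ = (U : Matrix (Fin n) (Fin n) ℂ) * Matrix.diagonal (Complex.ofReal ∘ g ∘ d)
        * star (U : Matrix (Fin n) (Fin n) ℂ) := by rw [hUW, hWsV]

lemma rcofReal' : (RCLike.ofReal : ℝ → ℂ) = Complex.ofReal := rfl

lemma conj_mul_self (z : ℂ) : (starRingEnd ℂ) z * z = ((‖z‖ ^ 2 : ℝ) : ℂ) := by
  rw [mul_comm, Complex.mul_conj]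
  norm_cast
  simp [Complex.normSq_eq_norm_sq]

/-- `tr (g(Y) · X).re = ∑_j g(μ_j) ∑_i λ_i |W i j|²` where `W = U* V`. -/
lemma trace_cfc_mul_re {n : ℕ} {X Y : Matrix (Fin n) (Fin n) ℂ}
    (hX : X.IsHermitian) (hY : Y.IsHermitian) (g : ℝ → ℝ) :
    ((hY.cfc g) * X).trace.re =
      ∑ j, g (hY.eigenvalues j) *
        ∑ i, hX.eigenvalues i *
          ‖(star (hX.eigenvectorUnitary : Matrix (Fin n) (Fin n) ℂ) *
            (hY.eigenvectorUnitary : Matrix (Fin n) (Fin n) ℂ)) i j‖ ^ 2 := by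
  set U : Matrix (Fin n) (Fin n) ℂ := (hX.eigenvectorUnitary : Matrix (Fin n) (Fin n) ℂ) with hU
  set V : Matrix (Fin n) (Fin n) ℂ := (hY.eigenvectorUnitary : Matrix (Fin n) (Fin n) ℂ) with hV
  set lam := hX.eigenvalues
  set μ := hY.eigenvalues
  set W : Matrix (Fin n) (Fin n) ℂ := star U * V with hW
  set Dg : Matrix (Fin n) (Fin n) ℂ := Matrix.diagonal (Complex.ofReal ∘ g ∘ μ) with hDg
  set Dl : Matrix (Fin n) (Fin n) ℂ := Matrix.diagonal (Complex.ofReal ∘ lam) with hDl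
  have hcfc : hY.cfc g = V * Dg * star V := by rw [Matrix.IsHermitian.cfc, Unitary.conjStarAlgAut_apply, rcofReal']
  have hXspec : X = U * Dl * star U := by
    have := hX.spectral_theorem; rw [rcofReal'] at this; exact this
  have htr : ((hY.cfc g) * X).trace = (Dg * (star W * Dl * W)).trace := by
    rw [hcfc, Matrix.mul_assoc V Dg (star V), Matrix.mul_assoc V _ X, Matrix.trace_mul_comm]
    congr 1
    rw [hW, Matrix.star_mul, star_star, hXspec]
    simp only [Matrix.mul_assoc]
  rw [htr]
  have hentry : ∀ j, (star W * Dl * W) j j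
      = ((∑ i, lam i * ‖W i j‖ ^ 2 : ℝ) : ℂ) := by
    intro j
    rw [Matrix.mul_assoc, Matrix.mul_apply, Complex.ofReal_sum]
    apply Finset.sum_congr rfl
    intro i _
    rw [Matrix.star_apply, Matrix.diagonal_mul, Function.comp_apply,
      show star (W i j) = (starRingEnd ℂ) (W i j) from rfl, Complex.ofReal_mul,
      mul_left_comm, conj_mul_self]
  have : (Dg * (star W * Dl * W)).trace = ∑ j, ((g (μ j) * ∑ i, lam i * ‖W i j‖ ^ 2 : ℝ) : ℂ) := by
    rw [Matrix.trace]
    apply Finset.sum_congr rfl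
    intro j _
    rw [Matrix.diag_apply, Matrix.diagonal_mul, hentry j, Function.comp_apply,
      ← Complex.ofReal_mul, Function.comp_apply]
  rw [this, Complex.re_sum]
  simp [← Complex.ofReal_pow]

lemma key_ineq {n k : ℕ} (hk1 : 1 ≤ k) (hkn : k ≤ n)
    (f ζ : ℝ → ℝ) (hfconv : ConvexOn ℝ Set.univ f) (hf0 : f 0 = 0)
    (h0sub : ∀ x, 0 ≤ f x) (hζ : ∀ x y, f x + ζ x * (y - x) ≤ f y) (hζ0 : ζ 0 = 0)
    {X Y : Matrix (Fin n) (Fin n) ℂ} (hX : X.IsHermitian) (hY : Y.IsHermitian)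
    (hrank : Y.rank ≤ k) :
    (∑ i, f (hY.eigenvalues i)) + ((hY.cfc ζ) * (X - Y)).trace.re ≤
      sumTopK k (fun i => f (hX.eigenvalues i)) := by
  classical
  set U : Matrix (Fin n) (Fin n) ℂ := (hX.eigenvectorUnitary : Matrix (Fin n) (Fin n) ℂ) with hU
  set V : Matrix (Fin n) (Fin n) ℂ := (hY.eigenvectorUnitary : Matrix (Fin n) (Fin n) ℂ) with hV
  set lam := hX.eigenvalues with hlam
  set μ := hY.eigenvalues with hμ
  set W : Matrix (Fin n) (Fin n) ℂ := star U * V with hW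
  set w : Fin n → Fin n → ℝ := fun i j => ‖W i j‖ ^ 2 with hw
  have hsUU : star U * U = 1 := Matrix.mem_unitaryGroup_iff'.mp hX.eigenvectorUnitary.2
  have hUsU : U * star U = 1 := Matrix.mem_unitaryGroup_iff.mp hX.eigenvectorUnitary.2
  have hsVV : star V * V = 1 := Matrix.mem_unitaryGroup_iff'.mp hY.eigenvectorUnitary.2
  have hVsV : V * star V = 1 := Matrix.mem_unitaryGroup_iff.mp hY.eigenvectorUnitary.2
  have hsWW : star W * W = 1 := by
    rw [hW, Matrix.star_mul, star_star, Matrix.mul_assoc, umul_cancel _ _ _ hUsU, hsVV]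
  have hWsW : W * star W = 1 := by
    rw [hW, Matrix.star_mul, star_star, Matrix.mul_assoc, umul_cancel _ _ _ hVsV, hsUU]
  set x : Fin n → ℝ := fun j => ∑ i, lam i * w i j with hx
  -- column sums of w are 1
  have hcol : ∀ j, ∑ i, w i j = 1 := by
    intro j
    have h1 := congrFun (congrFun hsWW j) j
    rw [Matrix.mul_apply, Matrix.one_apply_eq] at h1
    have h2 : ∀ i, (star W) j i * W i j = ((w i j : ℝ) : ℂ) := by
      intro i
      rw [Matrix.star_apply, show star (W i j) = (starRingEnd ℂ) (W i j) from rfl, conj_mul_self]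
    rw [Finset.sum_congr rfl (fun i _ => h2 i), ← Complex.ofReal_sum] at h1
    exact_mod_cast h1
  have hrow : ∀ i, ∑ j, w i j = 1 := by
    intro i
    have h1 := congrFun (congrFun hWsW i) i
    rw [Matrix.mul_apply, Matrix.one_apply_eq] at h1
    have h2 : ∀ j, W i j * (star W) j i = ((w i j : ℝ) : ℂ) := by
      intro j
      rw [Matrix.star_apply, show star (W i j) = (starRingEnd ℂ) (W i j) from rfl, mul_comm,
        conj_mul_self]
    rw [Finset.sum_congr rfl (fun j _ => h2 j), ← Complex.ofReal_sum] at h1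
    exact_mod_cast h1
  -- the trace term
  have hid : ∀ j, (∑ i, μ i * ‖((star V) * V) i j‖ ^ 2) = μ j := by
    intro j
    rw [hsVV, Finset.sum_eq_single j]
    · simp [Matrix.one_apply_eq]
    · intro i _ hij
      simp [Matrix.one_apply, hij]
    · simp
  have htr : ((hY.cfc ζ) * (X - Y)).trace.re = ∑ j, ζ (μ j) * (x j - μ j) := by
    rw [mul_sub, Matrix.trace_sub, Complex.sub_re]
    have hX' := trace_cfc_mul_re hX hY ζ
    have hY' := trace_cfc_mul_re hY hY ζ
    rw [← hU, ← hV, ← hμ, ← hlam, ← hW] at hX'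
    rw [← hV, ← hμ] at hY'
    rw [hX', hY', ← Finset.sum_sub_distrib]
    apply Finset.sum_congr rfl
    intro j _
    rw [hid j]
    simp only [hx, hw]
    ring
  rw [htr, ← Finset.sum_add_distrib]
  -- restrict to nonzero eigenvalues
  set T : Finset (Fin n) := Finset.univ.filter (fun j => hY.eigenvalues j ≠ 0) with hT
  have hTcard : T.card ≤ k := by
    have h1 : Y.rank = T.card := by
      rw [hY.rank_eq_card_non_zero_eigs, Fintype.card_subtype]
    omega
  have hrestrict : ∑ j, (f (μ j) + ζ (μ j) * (x j - μ j))
      = ∑ j ∈ T, (f (μ j) + ζ (μ j) * (x j - μ j)) := by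
    symm
    apply Finset.sum_subset (Finset.subset_univ T)
    intro j _ hj
    rw [hT] at hj
    simp only [Finset.mem_filter, Finset.mem_univ, true_and, not_not] at hj
    rw [hμ, hj, hf0, hζ0]
    ring
  rw [hrestrict]
  -- Jensen step
  have hjensen : ∀ j, f (x j) ≤ ∑ i, w i j * f (lam i) := by
    intro j
    have hxj : x j = ∑ i, w i j • lam i := by
      simp only [hx, smul_eq_mul]
      exact Finset.sum_congr rfl fun i _ => mul_comm _ _
    rw [hxj]
    exact hfconv.map_sum_le (fun i _ => sq_nonneg _) (hcol j) (fun i _ => Set.mem_univ _)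
  have step1 : ∑ j ∈ T, (f (μ j) + ζ (μ j) * (x j - μ j)) ≤ ∑ j ∈ T, ∑ i, w i j * f (lam i) :=
    Finset.sum_le_sum fun j _ => le_trans (hζ (μ j) (x j)) (hjensen j)
  set c : Fin n → ℝ := fun i => ∑ j ∈ T, w i j with hc
  have step2 : ∑ j ∈ T, ∑ i, w i j * f (lam i) = ∑ i, c i * f (lam i) := by
    rw [Finset.sum_comm]
    apply Finset.sum_congr rfl
    intro i _
    rw [hc, Finset.sum_mul]
  have hc0 : ∀ i, 0 ≤ c i := fun i => Finset.sum_nonneg fun j _ => sq_nonneg _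
  have hc1 : ∀ i, c i ≤ 1 := by
    intro i
    calc c i ≤ ∑ j, w i j :=
          Finset.sum_le_sum_of_subset_of_nonneg (Finset.subset_univ T)
            (fun j _ _ => sq_nonneg _)
      _ = 1 := hrow i
  have hck : ∑ i, c i ≤ (k : ℝ) := by
    rw [hc, Finset.sum_comm]
    have : ∀ j ∈ T, ∑ i, w i j = 1 := fun j _ => hcol j
    rw [Finset.sum_congr rfl this, Finset.sum_const, nsmul_eq_mul, mul_one]
    exact_mod_cast hTcard
  calc ∑ j ∈ T, (f (μ j) + ζ (μ j) * (x j - μ j))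
      ≤ ∑ i, c i * f (lam i) := by rw [← step2]; exact step1
    _ ≤ sumTopK k fun i => f (lam i) :=
        sum_weighted_le_sumTopK hk1 hkn _ c (fun i => h0sub _) hc0 hc1 hck

lemma conj_mul_conj {n : ℕ} (U : Matrix.unitaryGroup (Fin n) ℂ)
    (A B : Matrix (Fin n) (Fin n) ℂ) :
    ((U : Matrix (Fin n) (Fin n) ℂ) * A * star (U : Matrix (Fin n) (Fin n) ℂ)) *
      ((U : Matrix (Fin n) (Fin n) ℂ) * B * star (U : Matrix (Fin n) (Fin n) ℂ)) =
    (U : Matrix (Fin n) (Fin n) ℂ) * (A * B) * star (U : Matrix (Fin n) (Fin n) ℂ) := by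
  have hsUU : star (U : Matrix (Fin n) (Fin n) ℂ) * U = 1 := Matrix.mem_unitaryGroup_iff'.mp U.2
  calc ((U : Matrix (Fin n) (Fin n) ℂ) * A * star (U : Matrix (Fin n) (Fin n) ℂ)) *
      ((U : Matrix (Fin n) (Fin n) ℂ) * B * star (U : Matrix (Fin n) (Fin n) ℂ))
      = (U : Matrix (Fin n) (Fin n) ℂ) * (A * (star (U : Matrix (Fin n) (Fin n) ℂ) *
        ((U : Matrix (Fin n) (Fin n) ℂ) * (B * star (U : Matrix (Fin n) (Fin n) ℂ))))) := by
        simp only [Matrix.mul_assoc]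
    _ = (U : Matrix (Fin n) (Fin n) ℂ) * (A * (B * star (U : Matrix (Fin n) (Fin n) ℂ))) := by
        rw [umul_cancel _ _ _ hsUU]
    _ = (U : Matrix (Fin n) (Fin n) ℂ) * (A * B) * star (U : Matrix (Fin n) (Fin n) ℂ) := by
        simp only [Matrix.mul_assoc]

lemma trace_conj {n : ℕ} (U : Matrix.unitaryGroup (Fin n) ℂ) (M : Matrix (Fin n) (Fin n) ℂ) :
    ((U : Matrix (Fin n) (Fin n) ℂ) * M * star (U : Matrix (Fin n) (Fin n) ℂ)).trace = M.trace := by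
  rw [Matrix.trace_mul_cycle, Matrix.mem_unitaryGroup_iff'.mp U.2, Matrix.one_mul]

lemma attain {n k : ℕ} (f ζ : ℝ → ℝ) (hf0 : f 0 = 0) (hζ0 : ζ 0 = 0)
    {X : Matrix (Fin n) (Fin n) ℂ} (hX : X.IsHermitian)
    (S : Finset (Fin n)) (hS : S.card = k) :
    ∃ (Y : Matrix (Fin n) (Fin n) ℂ) (hY : Y.IsHermitian),
      Y.rank ≤ k ∧
      (∑ i, f (hY.eigenvalues i)) = ∑ i ∈ S, f (hX.eigenvalues i) ∧
      hY.cfc ζ = (hX.eigenvectorUnitary : Matrix (Fin n) (Fin n) ℂ) *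
        Matrix.diagonal (Complex.ofReal ∘ (fun i => if i ∈ S then ζ (hX.eigenvalues i) else 0)) *
        star (hX.eigenvectorUnitary : Matrix (Fin n) (Fin n) ℂ) ∧
      ((hY.cfc ζ) * (X - Y)).trace = 0 := by
  classical
  set U := hX.eigenvectorUnitary with hUdef
  set lam := hX.eigenvalues with hlam
  set d : Fin n → ℝ := fun i => if i ∈ S then lam i else 0 with hd
  set Y : Matrix (Fin n) (Fin n) ℂ :=
    (U : Matrix (Fin n) (Fin n) ℂ) * Matrix.diagonal (Complex.ofReal ∘ d) *
      star (U : Matrix (Fin n) (Fin n) ℂ) with hYdef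
  have hXspec : X = (U : Matrix (Fin n) (Fin n) ℂ) * Matrix.diagonal (Complex.ofReal ∘ lam) *
      star (U : Matrix (Fin n) (Fin n) ℂ) := by
    have := hX.spectral_theorem; rw [rcofReal'] at this; exact this
  have hdiagherm : (Matrix.diagonal (Complex.ofReal ∘ d)).IsHermitian := by
    apply Matrix.isHermitian_diagonal_of_self_adjoint
    funext i
    simp only [Pi.star_apply, Function.comp_apply, RCLike.star_def, Complex.conj_ofReal]
  have hY : Y.IsHermitian := by
    rw [hYdef, Matrix.star_eq_conjTranspose]
    exact Matrix.isHermitian_mul_mul_conjTranspose _ hdiagherm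
  refine ⟨Y, hY, ?_, ?_, ?_, ?_⟩
  · -- rank
    have h1 : Y.rank ≤ (Matrix.diagonal (Complex.ofReal ∘ d)).rank := by
      calc Y.rank ≤ ((U : Matrix (Fin n) (Fin n) ℂ) * Matrix.diagonal (Complex.ofReal ∘ d)).rank :=
            Matrix.rank_mul_le_left _ _
        _ ≤ _ := Matrix.rank_mul_le_right _ _
    have h2 : (Matrix.diagonal (Complex.ofReal ∘ d)).rank ≤ k := by
      rw [Matrix.rank_diagonal, Fintype.card_subtype]
      rw [← hS]
      apply Finset.card_le_card
      intro i hi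
      simp only [Finset.mem_filter, Finset.mem_univ, true_and, Function.comp_apply] at hi
      by_contra hiS
      apply hi
      rw [hd]
      simp [hiS]
    omega
  · -- sum of f of eigenvalues
    have e1 : (hY.cfc f).trace = ((∑ j, f (hY.eigenvalues j) : ℝ) : ℂ) := by
      rw [Matrix.IsHermitian.cfc, Unitary.conjStarAlgAut_apply, rcofReal', trace_conj hY.eigenvectorUnitary,
        Matrix.trace_diagonal, Complex.ofReal_sum]
      rfl
    have e2 : (hY.cfc f).trace = ((∑ i, f (d i) : ℝ) : ℂ) := by
      rw [cfc_conj U d hYdef hY f, trace_conj U, Matrix.trace_diagonal, Complex.ofReal_sum]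
      rfl
    have e3 : ∑ i, f (d i) = ∑ i ∈ S, f (lam i) := by
      have : ∀ i, f (d i) = if i ∈ S then f (lam i) else 0 := by
        intro i
        rw [hd]
        by_cases h : i ∈ S <;> simp [h, hf0]
      rw [Finset.sum_congr rfl (fun i _ => this i), Finset.sum_ite_mem, Finset.univ_inter]
    have := e1.symm.trans e2
    rw [Complex.ofReal_inj] at this
    rw [this, e3]
  · -- cfc formula
    rw [cfc_conj U d hYdef hY ζ]
    have : (Complex.ofReal ∘ ζ ∘ d) =
        (Complex.ofReal ∘ (fun i => if i ∈ S then ζ (lam i) else 0)) := by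
      funext i
      simp only [Function.comp_apply, hd]
      by_cases h : i ∈ S <;> simp [h, hζ0]
    rw [this]
  · -- trace zero
    rw [cfc_conj U d hYdef hY ζ]
    have hXY : X - Y = (U : Matrix (Fin n) (Fin n) ℂ) *
        (Matrix.diagonal (Complex.ofReal ∘ lam) - Matrix.diagonal (Complex.ofReal ∘ d)) *
        star (U : Matrix (Fin n) (Fin n) ℂ) := by
      rw [hXspec, hYdef, Matrix.mul_sub, Matrix.sub_mul]
    rw [hXY, conj_mul_conj U, trace_conj U]
    rw [Matrix.diagonal_sub, Matrix.diagonal_mul_diagonal, Matrix.trace_diagonal]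
    apply Finset.sum_eq_zero
    intro i _
    have hdi : Complex.ofReal (ζ (d i)) * (Complex.ofReal (lam i) - Complex.ofReal (d i)) = 0 := by
      by_cases h : i ∈ S
      · have hh : d i = lam i := by simp [hd, h]
        rw [hh]; ring
      · have hh : d i = 0 := by simp [hd, h]
        rw [hh, hζ0]; simp
    simpa [Function.comp] using hdi

lemma trace_re_le_frob {n : ℕ} (A B : Matrix (Fin n) (Fin n) ℂ) :
    ((A * B).trace).re ≤
      Real.sqrt (∑ i, ∑ j, ‖A i j‖ ^ 2) * Real.sqrt (∑ i, ∑ j, ‖B i j‖ ^ 2) := by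
  have htr : (A * B).trace = ∑ i, ∑ j, A i j * B j i := by
    rw [Matrix.trace]
    apply Finset.sum_congr rfl
    intro i _
    rw [Matrix.diag_apply, Matrix.mul_apply]
  have h1 : ((A * B).trace).re ≤ ‖(A * B).trace‖ := Complex.re_le_norm _
  have h2 : ‖(A * B).trace‖ ≤ ∑ i, ∑ j, ‖A i j‖ * ‖B j i‖ := by
    rw [htr]
    calc ‖∑ i, ∑ j, A i j * B j i‖ ≤ ∑ i, ‖∑ j, A i j * B j i‖ := norm_sum_le _ _
      _ ≤ ∑ i, ∑ j, ‖A i j * B j i‖ := Finset.sum_le_sum fun i _ => norm_sum_le _ _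
      _ = ∑ i, ∑ j, ‖A i j‖ * ‖B j i‖ := by simp [norm_mul]
  set P := ∑ i, ∑ j, ‖A i j‖ * ‖B j i‖ with hP
  set c := ∑ i, ∑ j, ‖A i j‖ ^ 2 with hc
  set e := ∑ i, ∑ j, ‖B i j‖ ^ 2 with he
  have hPnn : 0 ≤ P := Finset.sum_nonneg fun i _ => Finset.sum_nonneg fun j _ =>
    mul_nonneg (norm_nonneg _) (norm_nonneg _)
  have hcnn : 0 ≤ c := Finset.sum_nonneg fun i _ => Finset.sum_nonneg fun j _ => sq_nonneg _
  have hsq : P ^ 2 ≤ c * e := by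
    have := Finset.sum_mul_sq_le_sq_mul_sq (Finset.univ : Finset (Fin n × Fin n))
      (fun p => ‖A p.1 p.2‖) (fun p => ‖B p.2 p.1‖)
    simp only [Fintype.sum_prod_type] at this
    have hee : ∑ i : Fin n, ∑ j : Fin n, ‖B j i‖ ^ 2 = e := by
      rw [he]; exact Finset.sum_comm
    rw [hP, hc, ← hee]
    exact this
  have hsqrt : P ≤ Real.sqrt (c * e) := by
    have := Real.sqrt_le_sqrt hsq
    rwa [Real.sqrt_sq hPnn] at this
  rw [← Real.sqrt_mul hcnn]
  exact le_trans h1 (le_trans h2 hsqrt)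

lemma frob_conj_diag {n : ℕ} (U : Matrix.unitaryGroup (Fin n) ℂ) (g : Fin n → ℝ) :
    ∑ i, ∑ j, ‖((U : Matrix (Fin n) (Fin n) ℂ) * Matrix.diagonal (Complex.ofReal ∘ g) *
      star (U : Matrix (Fin n) (Fin n) ℂ)) i j‖ ^ 2 = ∑ i, g i ^ 2 := by
  classical
  set A : Matrix (Fin n) (Fin n) ℂ := (U : Matrix (Fin n) (Fin n) ℂ) *
    Matrix.diagonal (Complex.ofReal ∘ g) * star (U : Matrix (Fin n) (Fin n) ℂ) with hA
  have hdh : (Matrix.diagonal (Complex.ofReal ∘ g)).IsHermitian := by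
    apply Matrix.isHermitian_diagonal_of_self_adjoint
    funext i
    simp only [Pi.star_apply, Function.comp_apply, RCLike.star_def, Complex.conj_ofReal]
  have hAh : A.IsHermitian := by
    rw [hA, Matrix.star_eq_conjTranspose]
    exact Matrix.isHermitian_mul_mul_conjTranspose _ hdh
  have hAA : A * A = (U : Matrix (Fin n) (Fin n) ℂ) *
      Matrix.diagonal ((Complex.ofReal ∘ g) * (Complex.ofReal ∘ g)) *
      star (U : Matrix (Fin n) (Fin n) ℂ) := by
    rw [hA, conj_mul_conj U, Matrix.diagonal_mul_diagonal, Pi.mul_def]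
  have h1 : (A * A).trace = ((∑ i, g i ^ 2 : ℝ) : ℂ) := by
    rw [hAA, trace_conj U, Matrix.trace_diagonal, Complex.ofReal_sum]
    apply Finset.sum_congr rfl
    intro i _
    simp only [Pi.mul_apply, Function.comp_apply]
    rw [← Complex.ofReal_mul]
    norm_cast
    ring
  have h2 : (A * A).trace = ((∑ i, ∑ j, ‖A i j‖ ^ 2 : ℝ) : ℂ) := by
    rw [Matrix.trace]
    rw [show ((∑ i, ∑ j, ‖A i j‖ ^ 2 : ℝ) : ℂ) = ∑ j, ((∑ i, ‖A i j‖ ^ 2 : ℝ) : ℂ) by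
      rw [← Complex.ofReal_sum, Finset.sum_comm]]
    apply Finset.sum_congr rfl
    intro j _
    rw [Matrix.diag_apply, Matrix.mul_apply, Complex.ofReal_sum]
    apply Finset.sum_congr rfl
    intro i _
    have hji : A j i = (starRingEnd ℂ) (A i j) := by
      conv_lhs => rw [← hAh]
      rfl
    rw [hji, conj_mul_self]
  have := h1.symm.trans h2
  rw [Complex.ofReal_inj] at this
  exact this.symm

lemma zeta_abs_le_one {f ζ : ℝ → ℝ} (hL : LipschitzWith 1 f)
    (hζ : ∀ x y, f x + ζ x * (y - x) ≤ f y) (x : ℝ) : |ζ x| ≤ 1 := by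
  have h1 := hζ x (x + 1)
  have h2 := hζ x (x - 1)
  have d1 := hL.dist_le_mul (x + 1) x
  have d2 := hL.dist_le_mul (x - 1) x
  simp only [Real.dist_eq, NNReal.coe_one, one_mul] at d1 d2
  have e1 : |f (x + 1) - f x| ≤ 1 := by
    calc |f (x + 1) - f x| ≤ |x + 1 - x| := d1
      _ = 1 := by norm_num
  have e2 : |f (x - 1) - f x| ≤ 1 := by
    calc |f (x - 1) - f x| ≤ |x - 1 - x| := d2
      _ = 1 := by norm_num
  have e1' := abs_le.mp e1
  have e2' := abs_le.mp e2
  apply abs_le.mpr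
  constructor <;> nlinarith [h1, h2]

lemma sumTopK_nonneg {n k : ℕ} (hkn : k ≤ n) {v : Fin n → ℝ} (hv : ∀ i, 0 ≤ v i) :
    0 ≤ sumTopK k v := by
  obtain ⟨s, hs⟩ := exists_card_eq (n := n) hkn
  exact le_trans (Finset.sum_nonneg fun i _ => hv i) (le_sumTopK v s hs)

lemma part1 {n k : ℕ} (hk1 : 1 ≤ k) (hkn : k ≤ n)
    (f ζ : ℝ → ℝ) (hfconv : ConvexOn ℝ Set.univ f) (hf0 : f 0 = 0)
    (h0sub : ∀ x : ℝ, 0 ≤ f x) (hζ : ∀ x y : ℝ, f x + ζ x * (y - x) ≤ f y) (hζ0 : ζ 0 = 0)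
    (X : Matrix (Fin n) (Fin n) ℂ) (hX : X.IsHermitian) :
    sumTopK k (fun i => f (hX.eigenvalues i)) =
      sSup {r : ℝ | ∃ (Y : Matrix (Fin n) (Fin n) ℂ) (hY : Y.IsHermitian),
        Y.rank ≤ k ∧
        r = (∑ i, f (hY.eigenvalues i)) + ((hY.cfc ζ) * (X - Y)).trace.re} := by
  have hub : ∀ r ∈ {r : ℝ | ∃ (Y : Matrix (Fin n) (Fin n) ℂ) (hY : Y.IsHermitian),
      Y.rank ≤ k ∧ r = (∑ i, f (hY.eigenvalues i)) + ((hY.cfc ζ) * (X - Y)).trace.re},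
      r ≤ sumTopK k (fun i => f (hX.eigenvalues i)) := by
    rintro r ⟨Y, hY, hrk, rfl⟩
    exact key_ineq hk1 hkn f ζ hfconv hf0 h0sub hζ hζ0 hX hY hrk
  obtain ⟨S, hScard, hSval, -⟩ := sumTopK_attained hkn (fun i => f (hX.eigenvalues i))
  obtain ⟨Y, hY, hrk, hsum, -, htr0⟩ := attain f ζ hf0 hζ0 hX S hScard
  have hmem : sumTopK k (fun i => f (hX.eigenvalues i)) ∈
      {r : ℝ | ∃ (Y : Matrix (Fin n) (Fin n) ℂ) (hY : Y.IsHermitian),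
        Y.rank ≤ k ∧ r = (∑ i, f (hY.eigenvalues i)) + ((hY.cfc ζ) * (X - Y)).trace.re} := by
    refine ⟨Y, hY, hrk, ?_⟩
    rw [htr0, hsum, hSval]
    simp
  exact le_antisymm (le_csSup ⟨_, hub⟩ hmem)
    (Real.sSup_le hub (sumTopK_nonneg hkn fun i => h0sub _))

lemma part3_onesided {n k : ℕ} (hk1 : 1 ≤ k) (hkn : k ≤ n)
    (f ζ : ℝ → ℝ) (hfconv : ConvexOn ℝ Set.univ f) (hf0 : f 0 = 0)
    (h0sub : ∀ x : ℝ, 0 ≤ f x) (hζ : ∀ x y : ℝ, f x + ζ x * (y - x) ≤ f y) (hζ0 : ζ 0 = 0)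
    (hL : LipschitzWith 1 f)
    (X₁ X₂ : Matrix (Fin n) (Fin n) ℂ) (h₁ : X₁.IsHermitian) (h₂ : X₂.IsHermitian) :
    sumTopK k (fun i => f (h₁.eigenvalues i)) - sumTopK k (fun i => f (h₂.eigenvalues i)) ≤
      Real.sqrt k * frobNorm (X₁ - X₂) := by
  classical
  obtain ⟨S, hScard, hSval, -⟩ := sumTopK_attained hkn (fun i => f (h₁.eigenvalues i))
  obtain ⟨Y, hY, hrk, hsum, hcfcζ, htr0⟩ := attain f ζ hf0 hζ0 h₁ S hScard
  have hkey := key_ineq hk1 hkn f ζ hfconv hf0 h0sub hζ hζ0 h₂ hY hrk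
  have hdec : (hY.cfc ζ * (X₂ - Y)).trace
      = (hY.cfc ζ * (X₁ - Y)).trace + (hY.cfc ζ * (X₂ - X₁)).trace := by
    rw [← Matrix.trace_add, ← mul_add]
    congr 1
    abel
  have htr2 : (hY.cfc ζ * (X₂ - Y)).trace.re = (hY.cfc ζ * (X₂ - X₁)).trace.re := by
    rw [hdec, htr0, zero_add]
  have hcs : -(hY.cfc ζ * (X₂ - X₁)).trace.re ≤ Real.sqrt k * frobNorm (X₁ - X₂) := by
    have hflip : X₁ - X₂ = -(X₂ - X₁) := by abel
    have hneg : -(hY.cfc ζ * (X₂ - X₁)).trace.re = (hY.cfc ζ * (X₁ - X₂)).trace.re := by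
      rw [hflip, mul_neg, Matrix.trace_neg]
      simp
    rw [hneg]
    have hCS := trace_re_le_frob (hY.cfc ζ) (X₁ - X₂)
    have hfrk : ∑ i, ∑ j, ‖(hY.cfc ζ) i j‖ ^ 2 ≤ (k : ℝ) := by
      rw [hcfcζ, frob_conj_diag h₁.eigenvectorUnitary _]
      calc ∑ i, (if i ∈ S then ζ (h₁.eigenvalues i) else 0) ^ 2
          ≤ ∑ i, (if i ∈ S then (1 : ℝ) else 0) := by
            apply Finset.sum_le_sum
            intro i _
            by_cases h : i ∈ S
            · simp only [h, if_true]
              have := zeta_abs_le_one hL hζ (h₁.eigenvalues i)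
              nlinarith [sq_abs (ζ (h₁.eigenvalues i)), abs_nonneg (ζ (h₁.eigenvalues i))]
            · simp [h]
        _ = S.card := by simp
        _ = (k : ℝ) := by rw [hScard]
    calc (hY.cfc ζ * (X₁ - X₂)).trace.re
        ≤ Real.sqrt (∑ i, ∑ j, ‖(hY.cfc ζ) i j‖ ^ 2) *
          Real.sqrt (∑ i, ∑ j, ‖(X₁ - X₂) i j‖ ^ 2) := hCS
      _ ≤ Real.sqrt k * Real.sqrt (∑ i, ∑ j, ‖(X₁ - X₂) i j‖ ^ 2) :=
          mul_le_mul_of_nonneg_right (Real.sqrt_le_sqrt hfrk) (Real.sqrt_nonneg _)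
      _ = Real.sqrt k * frobNorm (X₁ - X₂) := by rw [frobNorm]
  have h1v : sumTopK k (fun i => f (h₁.eigenvalues i)) = ∑ i, f (hY.eigenvalues i) := by
    rw [hSval, ← hsum]
  linarith [hkey, htr2.symm.le, htr2.le]

/-- variational representation of the truncated trace `tr_[k] f(X)`
(the sum of the `k` largest values of `f` at the eigenvalues of `X`) as a supremum
of affine functions over Hermitian matrices of rank at most `k`; consequently
`X ↦ tr_[k] f(X)` is convex, and `√k`-Lipschitz for the Hilbert–Schmidt norm when
`f` is `1`-Lipschitz. -/
theorem stmt_6 {n k : ℕ} (hk1 : 1 ≤ k) (hkn : k ≤ n)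
    (f ζ : ℝ → ℝ) (hfconv : ConvexOn ℝ Set.univ f) (hf0 : f 0 = 0)
    (h0sub : ∀ x : ℝ, 0 ≤ f x)  -- `0 ∈ ∂f(0)` given `f 0 = 0`
    (hζ : ∀ x y : ℝ, f x + ζ x * (y - x) ≤ f y)  -- `ζ(x) ∈ ∂f(x)`
    (hζ0 : ζ 0 = 0) :
    (∀ (X : Matrix (Fin n) (Fin n) ℂ) (hX : X.IsHermitian),
      sumTopK k (fun i => f (hX.eigenvalues i)) =
        sSup {r : ℝ | ∃ (Y : Matrix (Fin n) (Fin n) ℂ) (hY : Y.IsHermitian),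
          Y.rank ≤ k ∧
          r = (∑ i, f (hY.eigenvalues i)) + ((hY.cfc ζ) * (X - Y)).trace.re}) ∧
    (∀ (X₁ X₂ : Matrix (Fin n) (Fin n) ℂ) (h₁ : X₁.IsHermitian) (h₂ : X₂.IsHermitian)
        (a b : ℝ), 0 ≤ a → 0 ≤ b → a + b = 1 →
        ∀ h₃ : ((a : ℂ) • X₁ + (b : ℂ) • X₂).IsHermitian,
        sumTopK k (fun i => f (h₃.eigenvalues i)) ≤
          a * sumTopK k (fun i => f (h₁.eigenvalues i)) +
            b * sumTopK k (fun i => f (h₂.eigenvalues i))) ∧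
    (LipschitzWith 1 f →
      ∀ (X₁ X₂ : Matrix (Fin n) (Fin n) ℂ) (h₁ : X₁.IsHermitian) (h₂ : X₂.IsHermitian),
        |sumTopK k (fun i => f (h₁.eigenvalues i)) -
            sumTopK k (fun i => f (h₂.eigenvalues i))| ≤
          Real.sqrt k * frobNorm (X₁ - X₂)) := by

  refine ⟨part1 hk1 hkn f ζ hfconv hf0 h0sub hζ hζ0, ?_, ?_⟩
  · -- convexity
    intro X₁ X₂ h₁ h₂ a b ha hb hab h₃
    rw [part1 hk1 hkn f ζ hfconv hf0 h0sub hζ hζ0 _ h₃]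
    have hbound : 0 ≤ a * sumTopK k (fun i => f (h₁.eigenvalues i)) +
        b * sumTopK k (fun i => f (h₂.eigenvalues i)) := by
      have n1 := sumTopK_nonneg (k := k) hkn (fun i => h0sub (h₁.eigenvalues i))
      have n2 := sumTopK_nonneg (k := k) hkn (fun i => h0sub (h₂.eigenvalues i))
      positivity
    apply Real.sSup_le _ hbound
    rintro r ⟨Y, hY, hrk, rfl⟩
    have hsplit : (a : ℂ) • X₁ + (b : ℂ) • X₂ - Y
        = (a : ℂ) • (X₁ - Y) + (b : ℂ) • (X₂ - Y) := by
      rw [smul_sub, smul_sub]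
      have : (a : ℂ) • Y + (b : ℂ) • Y = Y := by
        rw [← add_smul]
        norm_cast
        rw [hab, one_smul]
      calc (a : ℂ) • X₁ + (b : ℂ) • X₂ - Y
          = (a : ℂ) • X₁ + (b : ℂ) • X₂ - ((a : ℂ) • Y + (b : ℂ) • Y) := by rw [this]
        _ = (a : ℂ) • X₁ - (a : ℂ) • Y + ((b : ℂ) • X₂ - (b : ℂ) • Y) := by abel
    have htrace : ((hY.cfc ζ) * ((a : ℂ) • X₁ + (b : ℂ) • X₂ - Y)).trace.re
        = a * ((hY.cfc ζ) * (X₁ - Y)).trace.re + b * ((hY.cfc ζ) * (X₂ - Y)).trace.re := by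
      rw [hsplit, mul_add, Matrix.trace_add, mul_smul_comm, mul_smul_comm,
        Matrix.trace_smul, Matrix.trace_smul]
      rw [Complex.add_re]
      simp only [smul_eq_mul, Complex.re_ofReal_mul]
    rw [htrace]
    have k1 := key_ineq hk1 hkn f ζ hfconv hf0 h0sub hζ hζ0 h₁ hY hrk
    have k2 := key_ineq hk1 hkn f ζ hfconv hf0 h0sub hζ hζ0 h₂ hY hrk
    have e : (∑ i, f (hY.eigenvalues i)) +
        (a * ((hY.cfc ζ) * (X₁ - Y)).trace.re + b * ((hY.cfc ζ) * (X₂ - Y)).trace.re)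
        = a * ((∑ i, f (hY.eigenvalues i)) + ((hY.cfc ζ) * (X₁ - Y)).trace.re) +
          b * ((∑ i, f (hY.eigenvalues i)) + ((hY.cfc ζ) * (X₂ - Y)).trace.re) := by
      have : a * (∑ i, f (hY.eigenvalues i)) + b * (∑ i, f (hY.eigenvalues i))
          = ∑ i, f (hY.eigenvalues i) := by rw [← add_mul, hab, one_mul]
      nlinarith [this]
    rw [e]
    exact add_le_add (mul_le_mul_of_nonneg_left k1 ha) (mul_le_mul_of_nonneg_left k2 hb)
  · -- Lipschitz
    intro hL X₁ X₂ h₁ h₂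
    have hsym : frobNorm (X₂ - X₁) = frobNorm (X₁ - X₂) := by
      rw [frobNorm, frobNorm]
      congr 1
      apply Finset.sum_congr rfl
      intro i _
      apply Finset.sum_congr rfl
      intro j _
      rw [Matrix.sub_apply, Matrix.sub_apply, norm_sub_rev]
    rw [abs_sub_le_iff]
    constructor
    · exact part3_onesided hk1 hkn f ζ hfconv hf0 h0sub hζ hζ0 hL X₁ X₂ h₁ h₂
    · rw [← hsym]
      exact part3_onesided hk1 hkn f ζ hfconv hf0 h0sub hζ hζ0 hL X₂ X₁ h₂ h₁
end

section
/- Let M_k = {Y Hermitian n × n : rank(Y) ≤ k, ‖Y‖_op ≤ 1}. For any ε ∈ (0,1), the covering number of M_k by Hilbert–Schmidt balls of radius ε satisfies log N(M_k, ε B₂) ≤ 2 n k log(12 k / ε). -/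
open MeasureTheory Metric Module Finset
open scoped ENNReal

lemma exists_net (E : Type*) [NormedAddCommGroup E] [NormedSpace ℝ E]
    [FiniteDimensional ℝ E] [Nontrivial E] {δ : ℝ} (hδ : 0 < δ) :
    ∃ P : Finset E, ↑P ⊆ closedBall (0:E) 1 ∧
      (∀ x ∈ closedBall (0:E) 1, ∃ y ∈ P, dist x y ≤ δ) ∧
      (P.card : ℝ) ≤ (1 + 2/δ) ^ (finrank ℝ E) := by
  classical
  borelize E
  set d := finrank ℝ E with hd
  let μ : Measure E := (finBasis ℝ E).addHaar
  have hm0 : μ (ball (0:E) 1) ≠ 0 := (measure_ball_pos μ 0 one_pos).ne'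
  have hmt : μ (ball (0:E) 1) ≠ ⊤ := measure_ball_lt_top.ne
  have key : ∀ C : Finset E, ↑C ⊆ closedBall (0:E) 1 →
      ((C:Set E).Pairwise fun a b => δ ≤ dist a b) → (C.card : ℝ) ≤ (1 + 2/δ) ^ d := by
    intro C hsub hsep
    have hdisj : (C : Set E).PairwiseDisjoint (fun c => ball c (δ/2)) := by
      intro x hx y hy hxy
      exact ball_disjoint_ball (by linarith [hsep hx hy hxy])
    have hmeas : μ (⋃ c ∈ C, ball c (δ/2)) = ∑ c ∈ C, μ (ball c (δ/2)) :=
      measure_biUnion_finset hdisj (fun b _ => measurableSet_ball)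
    have hsub2 : (⋃ c ∈ C, ball c (δ/2)) ⊆ closedBall (0:E) (1 + δ/2) := by
      intro z hz
      simp only [Set.mem_iUnion] at hz
      obtain ⟨c, hc, hz⟩ := hz
      have h1 : dist z c < δ/2 := mem_ball.1 hz
      have h2 : dist c 0 ≤ 1 := mem_closedBall.1 (hsub hc)
      have := dist_triangle z c 0
      exact mem_closedBall.2 (by linarith)
    have hsum : ∑ c ∈ C, μ (ball c (δ/2)) = (C.card : ℝ≥0∞) * μ (ball (0:E) (δ/2)) := by
      rw [Finset.sum_congr rfl (fun c _ => Measure.addHaar_ball_center μ c (δ/2))]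
      simp [Finset.sum_const, nsmul_eq_mul]
    have hle : (C.card : ℝ≥0∞) * μ (ball (0:E) (δ/2)) ≤ μ (closedBall (0:E) (1 + δ/2)) := by
      rw [← hsum, ← hmeas]; exact measure_mono hsub2
    rw [Measure.addHaar_ball μ 0 (by linarith : (0:ℝ) ≤ δ/2),
      Measure.addHaar_closedBall μ 0 (by linarith : (0:ℝ) ≤ 1 + δ/2), ← mul_assoc] at hle
    have hle2 : (C.card : ℝ≥0∞) * ENNReal.ofReal ((δ/2) ^ d) ≤ ENNReal.ofReal ((1 + δ/2) ^ d) :=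
      (ENNReal.mul_le_mul_iff_left hm0 hmt).1 (by simpa [mul_assoc, mul_comm, mul_left_comm] using hle)
    have hreal : (C.card : ℝ) * (δ/2) ^ d ≤ (1 + δ/2) ^ d := by
      rw [show ((C.card : ℝ≥0∞)) = ENNReal.ofReal (C.card : ℝ) by simp,
        ← ENNReal.ofReal_mul (by positivity)] at hle2
      exact (ENNReal.ofReal_le_ofReal_iff (by positivity)).1 hle2
    have hpow : (0:ℝ) < (δ/2) ^ d := by positivity
    rw [← le_div_iff₀ hpow] at hreal
    refine hreal.trans ?_
    rw [← div_pow]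
    have heq : (1 + δ/2) / (δ/2) = 1 + 2/δ := by field_simp; ring
    rw [heq]
  -- choose a separated set of maximal cardinality
  let Good : Finset E → Prop := fun C => ↑C ⊆ closedBall (0:E) 1 ∧
      ((C:Set E).Pairwise fun a b => δ ≤ dist a b)
  have hbound : ∀ C, Good C → C.card ≤ ⌊(1 + 2/δ) ^ d⌋₊ :=
    fun C hC => Nat.le_floor (key C hC.1 hC.2)
  let b := ⌊(1 + 2/δ) ^ d⌋₊
  have h0 : (fun c => ∃ C, Good C ∧ C.card = c) 0 :=
    ⟨∅, ⟨by simp, by simp⟩, rfl⟩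
  obtain ⟨P, hPgood, hPcard⟩ :=
    Nat.findGreatest_spec (P := fun c => ∃ C, Good C ∧ C.card = c) (Nat.zero_le b) h0
  have hmax : ∀ C, Good C → C.card ≤ Nat.findGreatest (fun c => ∃ C, Good C ∧ C.card = c) b :=
    fun C hC => Nat.le_findGreatest (hbound C hC) ⟨C, hC, rfl⟩
  refine ⟨P, hPgood.1, ?_, key P hPgood.1 hPgood.2⟩
  intro x hx
  by_contra hno
  push_neg at hno
  have hxP : x ∉ P := fun hxmem => by
    have := hno x hxmem
    simp at this
    linarith
  have hgood' : Good (insert x P) := by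
    constructor
    · intro z hz
      rcases Finset.mem_coe.1 hz with hz'
      rcases Finset.mem_insert.1 hz' with rfl | hz''
      · exact hx
      · exact hPgood.1 hz''
    · intro a ha b hb hab
      simp only [Finset.coe_insert, Set.mem_insert_iff] at ha hb
      rcases ha with rfl | ha
      · rcases hb with rfl | hb
        · exact absurd rfl hab
        · exact (hno b hb).le
      · rcases hb with rfl | hb
        · rw [dist_comm]; exact (hno a ha).le
        · exact hPgood.2 ha hb hab
  have := hmax _ hgood'
  rw [Finset.card_insert_of_notMem hxP, hPcard] at this
  omega

noncomputable def outerP {n : ℕ} (x y : EuclideanSpace ℂ (Fin n)) :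
    Matrix (Fin n) (Fin n) ℂ :=
  Matrix.of fun i j => x i * (starRingEnd ℂ) (y j)

lemma frobNorm_eq_norm {n : ℕ} (A : Matrix (Fin n) (Fin n) ℂ) :
    frobNorm A = @norm _ (Matrix.frobeniusSeminormedAddCommGroup.toNorm) A := by
  rw [frobNorm, Matrix.frobenius_norm_def, Real.sqrt_eq_rpow]
  congr 1
  apply Finset.sum_congr rfl; intro i _
  apply Finset.sum_congr rfl; intro j _
  rw [show (2:ℝ) = ((2:ℕ):ℝ) by norm_num, Real.rpow_natCast]

lemma frobNorm_sum_le {n : ℕ} {ι : Type*} (s : Finset ι) (f : ι → Matrix (Fin n) (Fin n) ℂ) :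
    frobNorm (∑ j ∈ s, f j) ≤ ∑ j ∈ s, frobNorm (f j) := by
  letI := Matrix.frobeniusSeminormedAddCommGroup (α := ℂ) (m := Fin n) (n := Fin n)
  simp_rw [frobNorm_eq_norm]
  exact norm_sum_le s f

lemma frobNorm_add_le {n : ℕ} (A B : Matrix (Fin n) (Fin n) ℂ) :
    frobNorm (A + B) ≤ frobNorm A + frobNorm B := by
  letI := Matrix.frobeniusSeminormedAddCommGroup (α := ℂ) (m := Fin n) (n := Fin n)
  simp_rw [frobNorm_eq_norm]
  exact norm_add_le A B

lemma frobNorm_smul {n : ℕ} (c : ℂ) (A : Matrix (Fin n) (Fin n) ℂ) :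
    frobNorm (c • A) = ‖c‖ * frobNorm A := by
  letI := Matrix.frobeniusSeminormedAddCommGroup (α := ℂ) (m := Fin n) (n := Fin n)
  letI := Matrix.frobeniusNormedSpace (R := ℂ) (α := ℂ) (m := Fin n) (n := Fin n)
  simp_rw [frobNorm_eq_norm]
  exact norm_smul c A

lemma frobNorm_outer {n : ℕ} (x y : EuclideanSpace ℂ (Fin n)) :
    frobNorm (outerP x y) = ‖x‖ * ‖y‖ := by
  rw [frobNorm, EuclideanSpace.norm_eq, EuclideanSpace.norm_eq,
    ← Real.sqrt_mul (by positivity), Finset.sum_mul_sum]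
  congr 1
  apply Finset.sum_congr rfl; intro i _
  apply Finset.sum_congr rfl; intro j _
  simp [outerP, norm_mul, mul_pow]

lemma outer_sub {n : ℕ} (x y : EuclideanSpace ℂ (Fin n)) :
    outerP x x - outerP y y = outerP x (x - y) + outerP (x - y) y := by
  ext i j
  simp only [outerP, Matrix.sub_apply, Matrix.add_apply, Matrix.of_apply, PiLp.sub_apply,
    map_sub]
  ring

lemma frob_outer_sub_le {n : ℕ} (x y : EuclideanSpace ℂ (Fin n)) {δ : ℝ}
    (hx : ‖x‖ ≤ 1) (hy : ‖y‖ ≤ 1) (h : ‖x - y‖ ≤ δ) :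
    frobNorm (outerP x x - outerP y y) ≤ 2 * δ := by
  rw [outer_sub]
  refine (frobNorm_add_le _ _).trans ?_
  rw [frobNorm_outer, frobNorm_outer]
  have h0 : (0:ℝ) ≤ ‖x - y‖ := norm_nonneg _
  nlinarith [norm_nonneg x, norm_nonneg y]

/-- covering numbers of the set `M_k` of Hermitian matrices of rank at most
`k` and operator norm at most `1`: for any `ε ∈ (0,1)` there is an `ε`-net (for the
Hilbert–Schmidt norm) of cardinality at most `exp(2nk log(12k/ε))`, i.e.
`log N(M_k, ε B₂) ≤ 2nk log(12k/ε)`. -/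
theorem stmt_9 {n k : ℕ} (hk1 : 1 ≤ k) (hkn : k ≤ n)
    (ε : ℝ) (hε : ε ∈ Set.Ioo (0 : ℝ) 1) :
    ∃ T : Finset (Matrix (Fin n) (Fin n) ℂ),
      (∀ (Y : Matrix (Fin n) (Fin n) ℂ) (hY : Y.IsHermitian),
        Y.rank ≤ k → (∀ i, |hY.eigenvalues i| ≤ 1) →
          ∃ Z ∈ T, frobNorm (Y - Z) ≤ ε) ∧
      Real.log T.card ≤ 2 * n * k * Real.log (12 * k / ε) := by
  classical
  obtain ⟨hε0, hε1⟩ := hε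
  have hn1 : 1 ≤ n := le_trans hk1 hkn
  have hk0 : (0:ℝ) < (k:ℝ) := by exact_mod_cast hk1.trans_lt' Nat.zero_lt_one
  have hk1' : (1:ℝ) ≤ (k:ℝ) := by exact_mod_cast hk1
  set δ : ℝ := ε / (2 * k) with hδdef
  have hδ0 : 0 < δ := by positivity
  have hδ1 : δ ≤ 1 := by
    rw [hδdef, div_le_one (by positivity)]
    linarith
  haveI : Nontrivial (EuclideanSpace ℂ (Fin n)) := by
    refine ⟨EuclideanSpace.single ⟨0, hn1⟩ 1, 0, ?_⟩
    intro h
    have := congrArg (fun v : EuclideanSpace ℂ (Fin n) => v ⟨0, hn1⟩) h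
    simp [EuclideanSpace.single_apply] at this
  obtain ⟨N, hNsub, hNnet, hNcard⟩ := exists_net (EuclideanSpace ℂ (Fin n)) hδ0
  have hfr : Module.finrank ℝ (EuclideanSpace ℂ (Fin n)) = 2 * n := by
    rw [LinearEquiv.finrank_eq (WithLp.linearEquiv 2 ℝ (∀ _ : Fin n, ℂ))]
    simp [Module.finrank_pi_fintype, Complex.finrank_real_complex, mul_comm]
  rw [hfr] at hNcard
  have hNmem_norm : ∀ u ∈ N, ‖u‖ ≤ 1 := by
    intro u hu
    simpa [mem_closedBall_zero_iff] using hNsub hu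
  -- the "pick closest net point" function
  let pickOf : EuclideanSpace ℂ (Fin n) → EuclideanSpace ℂ (Fin n) := fun x =>
    if h : x ∈ Metric.closedBall (0 : EuclideanSpace ℂ (Fin n)) 1
    then (hNnet x h).choose else 0
  have hpick_mem : ∀ x (hx : x ∈ Metric.closedBall (0 : EuclideanSpace ℂ (Fin n)) 1),
      pickOf x ∈ N := by
    intro x hx
    simp only [pickOf, dif_pos hx]
    exact (hNnet x hx).choose_spec.1
  have hpick_close : ∀ x (hx : x ∈ Metric.closedBall (0 : EuclideanSpace ℂ (Fin n)) 1),
      ‖x - pickOf x‖ ≤ δ := by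
    intro x hx
    simp only [pickOf, dif_pos hx]
    have := (hNnet x hx).choose_spec.2
    rwa [dist_eq_norm] at this
  let tb : Bool × EuclideanSpace ℂ (Fin n) → Matrix (Fin n) (Fin n) ℂ :=
    fun q => (if q.1 then (1:ℂ) else -1) • outerP q.2 q.2
  refine ⟨(Fintype.piFinset (fun _ : Fin k => (Finset.univ : Finset Bool) ×ˢ N)).image
      (fun p => ∑ j : Fin k, tb (p j)), ?_, ?_⟩
  · -- covering property
    intro Y hY hrank hop
    set lam := hY.eigenvalues with hlam
    set v : Fin n → EuclideanSpace ℂ (Fin n) := fun m => hY.eigenvectorBasis m with hv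
    have hvnorm : ∀ m, ‖v m‖ = 1 := fun m => hY.eigenvectorBasis.orthonormal.1 m
    have hYdecomp : Y = ∑ m : Fin n, ((lam m : ℝ) : ℂ) • outerP (v m) (v m) := by
      conv_lhs => rw [hY.spectral_theorem]
      ext i j
      simp [Matrix.mul_apply, Matrix.diagonal_apply, Matrix.star_apply, Matrix.sum_apply,
        outerP, Finset.sum_ite_eq, mul_comm, mul_assoc, mul_left_comm]
      rfl
    have hcard : Fintype.card {m // lam m ≠ 0} ≤ Fintype.card (Fin k) := by
      rw [Fintype.card_fin, ← hY.rank_eq_card_non_zero_eigs]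
      exact hrank
    obtain ⟨e⟩ := Function.Embedding.nonempty_of_card_le hcard
    set w : Fin n → EuclideanSpace ℂ (Fin n) := fun m => Real.sqrt |lam m| • v m with hw
    have hwnorm : ∀ m, ‖w m‖ ≤ 1 := by
      intro m
      rw [hw]
      simp only [norm_smul, Real.norm_eq_abs, hvnorm, mul_one,
        abs_of_nonneg (Real.sqrt_nonneg _)]
      rw [show (1:ℝ) = Real.sqrt 1 by simp]
      exact Real.sqrt_le_sqrt (hop m)
    have hwball : ∀ m, w m ∈ Metric.closedBall (0 : EuclideanSpace ℂ (Fin n)) 1 := by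
      intro m; rw [mem_closedBall_zero_iff]; exact hwnorm m
    have h0ball : (0 : EuclideanSpace ℂ (Fin n)) ∈ Metric.closedBall
        (0 : EuclideanSpace ℂ (Fin n)) 1 := by simp
    let p : Fin k → Bool × EuclideanSpace ℂ (Fin n) := fun j =>
      if h : ∃ m : {m // lam m ≠ 0}, e m = j
      then (decide (0 ≤ lam h.choose), pickOf (w h.choose))
      else (true, pickOf 0)
    have hpmem : p ∈ Fintype.piFinset (fun _ : Fin k => (Finset.univ : Finset Bool) ×ˢ N) := by
      rw [Fintype.mem_piFinset]
      intro j
      rw [Finset.mem_product]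
      refine ⟨Finset.mem_univ _, ?_⟩
      by_cases h : ∃ m : {m // lam m ≠ 0}, e m = j
      · simp only [p, dif_pos h]
        exact hpick_mem _ (hwball _)
      · simp only [p, dif_neg h]
        exact hpick_mem _ h0ball
    refine ⟨∑ j : Fin k, tb (p j), Finset.mem_image.2 ⟨p, hpmem, rfl⟩, ?_⟩
    let actual : Fin k → Matrix (Fin n) (Fin n) ℂ := fun j =>
      if h : ∃ m : {m // lam m ≠ 0}, e m = j
      then ((lam h.choose : ℝ) : ℂ) • outerP (v h.choose) (v h.choose) else 0
    have hYsum : Y = ∑ j : Fin k, actual j := by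
      have h1 : ∑ j : Fin k, actual j = ∑ j ∈ Finset.univ.map e, actual j :=
        (Finset.sum_subset (Finset.subset_univ _) (fun j _ hj => by
          refine dif_neg ?_
          rintro ⟨m, hm⟩
          exact hj (Finset.mem_map.2 ⟨m, Finset.mem_univ m, hm⟩))).symm
      rw [h1, Finset.sum_map]
      have h2 : ∀ m : {m // lam m ≠ 0},
          actual (e m) = ((lam m : ℝ) : ℂ) • outerP (v m) (v m) := by
        intro m
        have hex : ∃ m' : {m // lam m ≠ 0}, e m' = e m := ⟨m, rfl⟩
        simp only [actual, dif_pos hex]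
        have hcm : hex.choose = m := e.injective hex.choose_spec
        rw [hcm]
      rw [Finset.sum_congr rfl (fun m _ => h2 m)]
      have h3 : ∑ m : {m // lam m ≠ 0}, ((lam m : ℝ) : ℂ) • outerP (v m) (v m)
          = ∑ m ∈ Finset.univ.filter (fun m => lam m ≠ 0),
              ((lam m : ℝ) : ℂ) • outerP (v m) (v m) :=
        (Finset.sum_subtype (Finset.univ.filter (fun m => lam m ≠ 0)) (fun x => by simp)
          (fun m => ((lam m : ℝ) : ℂ) • outerP (v m) (v m))).symm
      rw [h3]
      rw [Finset.sum_subset (Finset.filter_subset _ _) (fun m _ hm => by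
        simp only [Finset.mem_filter, Finset.mem_univ, true_and, not_not] at hm
        simp [hm])]
      exact hYdecomp
    have hterm : ∀ j : Fin k, frobNorm (actual j - tb (p j)) ≤ 2 * δ := by
      intro j
      by_cases h : ∃ m : {m // lam m ≠ 0}, e m = j
      · set m := h.choose with hm
        have houter_w : outerP (w m) (w m) = ((|lam m| : ℝ) : ℂ) • outerP (v m) (v m) := by
          ext i jj
          simp only [outerP, hw, Matrix.of_apply, PiLp.smul_apply, Complex.real_smul,
            map_mul, Complex.conj_ofReal, Matrix.smul_apply, smul_eq_mul]
          rw [show ((Real.sqrt |lam ↑m| : ℂ)) * (v ↑m) i *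
              (((Real.sqrt |lam ↑m| : ℂ)) * (starRingEnd ℂ) ((v ↑m) jj))
              = ((Real.sqrt |lam ↑m| : ℂ) * (Real.sqrt |lam ↑m| : ℂ)) *
                ((v ↑m) i * (starRingEnd ℂ) ((v ↑m) jj)) by ring]
          norm_cast
          rw [Real.mul_self_sqrt (abs_nonneg _)]
        have hsign : actual j = (if (decide (0 ≤ lam m)) then (1:ℂ) else -1) •
            outerP (w m) (w m) := by
          simp only [actual, dif_pos h, ← hm, houter_w, smul_smul]
          congr 1
          by_cases hpos : 0 ≤ lam m
          · simp [hpos, abs_of_nonneg hpos]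
          · push_neg at hpos
            rw [abs_of_neg hpos]
            simp only [hpos.not_ge, decide_eq_false_iff_not, Bool.if_false_right,
              decide_eq_true_eq, if_neg, not_false_iff]
            push_cast
            ring
        have hpj : tb (p j) = (if (decide (0 ≤ lam m)) then (1:ℂ) else -1) •
            outerP (pickOf (w m)) (pickOf (w m)) := by
          simp only [tb, p, dif_pos h, ← hm]
        rw [hsign, hpj, ← smul_sub, frobNorm_smul]
        have hs : ‖(if (decide (0 ≤ lam m)) then (1:ℂ) else -1)‖ = 1 := by
          by_cases hpos : (0:ℝ) ≤ lam m <;> simp [hpos]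
        rw [hs, one_mul]
        exact frob_outer_sub_le _ _ (hwnorm _)
          (hNmem_norm _ (hpick_mem _ (hwball _))) (hpick_close _ (hwball _))
      · have h0 : ‖pickOf 0‖ ≤ δ := by
          have := hpick_close 0 h0ball
          simpa using this
        have hred : actual j - tb (p j) = (-1 : ℂ) • outerP (pickOf 0) (pickOf 0) := by
          simp only [actual, dif_neg h, tb, p, zero_sub]
          simp [neg_one_smul]
        rw [hred, frobNorm_smul, frobNorm_outer]
        simp only [norm_neg, norm_one, one_mul]
        nlinarith [norm_nonneg (pickOf 0), hδ0.le, hδ1]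
    calc frobNorm (Y - ∑ j : Fin k, tb (p j))
        = frobNorm (∑ j : Fin k, (actual j - tb (p j))) := by
          rw [Finset.sum_sub_distrib, ← hYsum]
      _ ≤ ∑ j : Fin k, frobNorm (actual j - tb (p j)) := frobNorm_sum_le _ _
      _ ≤ ∑ _j : Fin k, 2 * δ := Finset.sum_le_sum (fun j _ => hterm j)
      _ = k * (2 * δ) := by simp [mul_comm]
      _ = ε := by rw [hδdef]; field_simp
  · -- cardinality bound
    set T := (Fintype.piFinset (fun _ : Fin k => (Finset.univ : Finset Bool) ×ˢ N)).image
      (fun p => ∑ j : Fin k, tb (p j)) with hT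
    have hstep : (T.card : ℝ) ≤ ((2 * N.card : ℕ) : ℝ) ^ k := by
      have h1 : T.card ≤ (2 * N.card) ^ k := by
        refine (Finset.card_image_le).trans ?_
        rw [Fintype.card_piFinset]
        simp [Finset.card_product]
      exact_mod_cast (Nat.cast_le.2 h1).trans_eq (by push_cast; ring)
    have hkeps : (1:ℝ) ≤ (k:ℝ)/ε := by
      rw [le_div_iff₀ hε0]
      linarith
    have h2δ : 2/δ = 4*(k:ℝ)/ε := by
      rw [hδdef]
      field_simp
      ring
    have hbase : ((2 * N.card : ℕ) : ℝ) ≤ (12 * k / ε) ^ (2 * n) := by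
      push_cast
      calc (2:ℝ) * N.card ≤ 2 * (1 + 2/δ) ^ (2*n) := by
            have := hNcard
            nlinarith [hNcard]
        _ ≤ (12/5)^(2*n) * (5*(k:ℝ)/ε) ^ (2*n) := by
            refine mul_le_mul ?_ ?_ (by positivity) (by positivity)
            · calc (2:ℝ) ≤ (12/5)^2 := by norm_num
                _ ≤ (12/5)^(2*n) := pow_le_pow_right₀ (by norm_num) (by omega)
            · refine pow_le_pow_left₀ (by positivity) ?_ _
              rw [h2δ]
              have : 4*(k:ℝ)/ε + 1 ≤ 5*(k:ℝ)/ε := by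
                have : 4*(k:ℝ)/ε + (k:ℝ)/ε = 5*(k:ℝ)/ε := by ring
                linarith [hkeps]
              linarith
        _ = (12 * k / ε) ^ (2*n) := by
            rw [← mul_pow]
            congr 1
            field_simp
    have hfinal : (T.card : ℝ) ≤ (12 * k / ε) ^ (2 * n * k) := by
      calc (T.card : ℝ) ≤ ((2 * N.card : ℕ) : ℝ) ^ k := hstep
        _ ≤ ((12 * k / ε) ^ (2 * n)) ^ k := by
            refine pow_le_pow_left₀ (by positivity) hbase _
        _ = (12 * k / ε) ^ (2 * n * k) := by rw [← pow_mul]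
    have hrhs0 : 0 ≤ 2 * (n:ℝ) * k * Real.log (12 * k / ε) := by
      have h1 : (1:ℝ) ≤ 12 * k / ε := by
        rw [le_div_iff₀ hε0]
        nlinarith [hk1']
      have := Real.log_nonneg h1
      positivity
    rcases Nat.eq_zero_or_pos T.card with h0 | h0
    · rw [h0]
      simpa using hrhs0
    · have hlog := Real.log_le_log (by exact_mod_cast h0) hfinal
      rw [Real.log_pow] at hlog
      refine hlog.trans ?_
      push_cast
      ring_nf
      exact le_refl _
end
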